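/- arXiv:math/0409407 — 12 statements merged into one kernel-verified Lean document; each statement's English description precedes it below -/
import Mathlib

section
/- For every finite set A ⊂ ℤ^d containing the origin and every rotor configuration ℓ : ℤ^d → Fin(2d), there exists N ∈ ℕ such that the particle position of the N-th iterate g^N(0, ℓ) lies outside A; i.e., the rotor-router path leaves the region A in finitely many steps. -/
/-- Lattice points of `ℤ^d`. -/
abbrev Zd (d : ℕ) := Fin d → ℤ

/-- The set `E_d = {±e_1, …, ±e_d}` of cardinal directions in `ℤ^d`. -/
def Ed (d : ℕ) : Set (Zd d) :=
  {v | ∃ i : Fin d, v = Pi.single i 1 ∨ v = Pi.single i (-1)}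

/-- Increment an element of `Fin n` by one, cyclically. -/
def finInc {n : ℕ} (j : Fin n) : Fin n :=
  ⟨(j.val + 1) % n, Nat.mod_lt _ (Nat.lt_of_le_of_lt (Nat.zero_le _) j.isLt)⟩

/-- One step of the rotor-router automaton: the particle at `p` moves in the direction
`ε(ℓ(p))` of the rotor at `p`, and that rotor is incremented (cyclically) by one. -/
def rotorStep {d : ℕ} (ε : Fin (2 * d) → Zd d) :
    Zd d × (Zd d → Fin (2 * d)) → Zd d × (Zd d → Fin (2 * d))
  | (p, ℓ) => (p + ε (ℓ p), Function.update ℓ p (finInc (ℓ p)))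

section Aux

variable {d : ℕ} (ε : Fin (2 * d) → Zd d) (ℓ : Zd d → Fin (2 * d))

/-- The position after `n` steps. -/
def rpos (n : ℕ) : Zd d := ((rotorStep ε)^[n] (0, ℓ)).1

/-- The rotor labels after `n` steps. -/
def rlab (n : ℕ) : Zd d → Fin (2 * d) := ((rotorStep ε)^[n] (0, ℓ)).2

lemma rotorStep_def (x : Zd d × (Zd d → Fin (2 * d))) :
    rotorStep ε x = (x.1 + ε (x.2 x.1), Function.update x.2 x.1 (finInc (x.2 x.1))) := by
  rcases x with ⟨p, l⟩; rfl

lemma rpos_succ (n : ℕ) : rpos ε ℓ (n + 1) = rpos ε ℓ n + ε (rlab ε ℓ n (rpos ε ℓ n)) := by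
  simp [rpos, rlab, Function.iterate_succ_apply', rotorStep_def]

lemma rlab_succ (n : ℕ) :
    rlab ε ℓ (n + 1) =
      Function.update (rlab ε ℓ n) (rpos ε ℓ n) (finInc (rlab ε ℓ n (rpos ε ℓ n))) := by
  simp [rpos, rlab, Function.iterate_succ_apply', rotorStep_def]

/-- The number of visits to `p` strictly before time `n`. -/
noncomputable def rcnt (p : Zd d) (n : ℕ) : ℕ :=
  ((Finset.range n).filter (fun t => rpos ε ℓ t = p)).card

lemma rcnt_le (p : Zd d) (n : ℕ) : rcnt ε ℓ p n ≤ n := by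
  classical
  calc rcnt ε ℓ p n ≤ (Finset.range n).card := Finset.card_filter_le _ _
  _ = n := Finset.card_range n

lemma rcnt_succ_pos {p : Zd d} {n : ℕ} (h : rpos ε ℓ n = p) :
    rcnt ε ℓ p (n + 1) = rcnt ε ℓ p n + 1 := by
  classical
  simp only [rcnt, Finset.range_add_one, Finset.filter_insert, h, if_pos]
  rw [Finset.card_insert_of_notMem]
  simp

lemma rcnt_succ_neg {p : Zd d} {n : ℕ} (h : rpos ε ℓ n ≠ p) :
    rcnt ε ℓ p (n + 1) = rcnt ε ℓ p n := by
  classical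
  simp [rcnt, Finset.range_add_one, Finset.filter_insert, h]

lemma rlab_val (p : Zd d) (n : ℕ) :
    (rlab ε ℓ n p).val = ((ℓ p).val + rcnt ε ℓ p n) % (2 * d) := by
  induction n with
  | zero =>
      simp [rlab, rcnt]
      exact (Nat.mod_eq_of_lt (ℓ p).isLt).symm
  | succ n ih =>
      rw [rlab_succ]
      by_cases h : rpos ε ℓ n = p
      · rw [h, Function.update_self, rcnt_succ_pos ε ℓ h]
        show ((rlab ε ℓ n p).val + 1) % (2 * d) = _
        rw [ih, Nat.mod_add_mod, Nat.add_assoc]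
      · rw [Function.update_of_ne (fun hh => h hh.symm), ih, rcnt_succ_neg ε ℓ h]

/-- If `p` is visited infinitely often, then for each `j` there is a visit of `p`
with exactly `j` earlier visits. -/
lemma visit_with_count {p : Zd d} (hS : {n | rpos ε ℓ n = p}.Infinite) (j : ℕ) :
    ∃ n, rpos ε ℓ n = p ∧ rcnt ε ℓ p n = j := by
  classical
  obtain ⟨t, hts, htc⟩ := hS.exists_subset_card_eq (j + 1)
  have hub : j + 1 ≤ rcnt ε ℓ p (t.sup id + 1) := by
    rw [← htc]
    apply Finset.card_le_card
    intro x hx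
    simp only [Finset.mem_filter, Finset.mem_range]
    exact ⟨Nat.lt_succ_of_le (Finset.le_sup (f := id) hx), hts hx⟩
  generalize t.sup id + 1 = m at hub
  clear hts htc t
  induction m with
  | zero => simp [rcnt] at hub
  | succ m ih =>
      by_cases hm : j + 1 ≤ rcnt ε ℓ p m
      · exact ih hm
      · push_neg at hm
        by_cases h : rpos ε ℓ m = p
        · refine ⟨m, h, ?_⟩
          rw [rcnt_succ_pos ε ℓ h] at hub
          omega
        · rw [rcnt_succ_neg ε ℓ h] at hub
          omega

/-- If `p` is visited infinitely often, then so is `p + ε k`, for every direction `k`. -/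
lemma neighbor_infinite {p : Zd d}
    (hS : {n | rpos ε ℓ n = p}.Infinite) (k : Fin (2 * d)) :
    {n | rpos ε ℓ n = p + ε k}.Infinite := by
  classical
  apply Set.infinite_of_forall_exists_gt
  intro a
  obtain ⟨n, hn, hc⟩ := visit_with_count ε ℓ hS (2 * d * (a + 1) + (k.val + 2 * d - (ℓ p).val))
  have hdpos : 0 < 2 * d := k.pos
  refine ⟨n + 1, ?_, ?_⟩
  · show rpos ε ℓ (n + 1) = p + ε k
    have hlab : rlab ε ℓ n p = k := by
      apply Fin.ext
      rw [rlab_val, hc]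
      have hlp : (ℓ p).val < 2 * d := (ℓ p).isLt
      have heq : (ℓ p).val + (2 * d * (a + 1) + (k.val + 2 * d - (ℓ p).val))
          = k.val + 2 * d * (a + 2) := by
        have hX : 2 * d * (a + 2) = 2 * d * (a + 1) + 2 * d := by ring
        omega
      rw [heq, Nat.add_mul_mod_self_left, Nat.mod_eq_of_lt k.isLt]
    rw [rpos_succ, hn, hlab]
  · have := rcnt_le ε ℓ p n
    have h1 : 2 * d * (a + 1) ≥ a + 1 := by nlinarith
    omega

end Aux

/-- For every finite region `A ⊆ ℤ^d` containing the origin and every rotor configuration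
`ℓ`, the rotor-router path started at the origin leaves `A` in finitely many steps:
there is `N` with the position of `g^N(0, ℓ)` outside `A`. -/
theorem rotor_path_leaves_region (d : ℕ) (hd : 0 < d)
    (ε : Fin (2 * d) → Zd d)
    (hε₁ : Function.Injective ε) (hε₂ : ∀ k, ε k ∈ Ed d)
    (hε₃ : ∀ v ∈ Ed d, ∃ k, ε k = v)
    (A : Set (Zd d)) (hA : A.Finite) (h0 : (0 : Zd d) ∈ A)
    (ℓ : Zd d → Fin (2 * d)) :
    ∃ N : ℕ, ((rotorStep ε)^[N] (0, ℓ)).1 ∉ A := by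
  classical
  by_contra hcon
  push_neg at hcon
  have hmemA : ∀ n, rpos ε ℓ n ∈ A := fun n => hcon n
  -- pigeonhole: some point of A is visited infinitely often
  haveI := hA.to_subtype
  obtain ⟨⟨p₀, hp₀⟩, hfib⟩ :=
    Finite.exists_infinite_fiber (fun n : ℕ => (⟨rpos ε ℓ n, hmemA n⟩ : A))
  have hinf₀ : {n | rpos ε ℓ n = p₀}.Infinite := by
    have hset : {n | rpos ε ℓ n = p₀}
        = (fun n : ℕ => (⟨rpos ε ℓ n, hmemA n⟩ : A)) ⁻¹' {⟨p₀, hp₀⟩} := by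
      ext n
      simp [Subtype.ext_iff]
    rw [hset, ← Set.infinite_coe_iff]
    exact hfib
  -- the direction e_0 and its rotor index
  set i0 : Fin d := ⟨0, hd⟩
  set v : Zd d := Pi.single i0 1 with hv
  obtain ⟨k, hk⟩ := hε₃ v ⟨i0, Or.inl rfl⟩
  -- every point p₀ + m • v is visited infinitely often
  have hray : ∀ m : ℕ, {n | rpos ε ℓ n = p₀ + (m : ℤ) • v}.Infinite := by
    intro m
    induction m with
    | zero => simpa using hinf₀
    | succ m ih =>
        have h2 := neighbor_infinite ε ℓ ih k
        rw [hk] at h2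
        have heq : p₀ + (m : ℤ) • v + v = p₀ + ((m + 1 : ℕ) : ℤ) • v := by
          push_cast
          rw [add_smul, one_smul]
          abel
        rwa [heq] at h2
  -- hence all of them lie in A
  have hrayA : ∀ m : ℕ, p₀ + (m : ℤ) • v ∈ A := by
    intro m
    obtain ⟨n, hn⟩ := (hray m).nonempty
    rw [← hn]
    exact hmemA n
  -- but these points are pairwise distinct, contradicting finiteness of A
  have hinj : Function.Injective (fun m : ℕ => p₀ + (m : ℤ) • v) := by
    intro a b hab
    have := congrFun hab i0
    simp only [Pi.add_apply, Pi.smul_apply, hv, Pi.single_eq_same, smul_eq_mul, mul_one] at this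
    omega
  exact (Set.infinite_of_injective_forall_mem hinj hrayA) hA
end

section
/- Let x ≤ 0 ≤ y be integers and ℓ : ℤ → {L, R} a labeling. Let m be the number of sites t with x ≤ t ≤ −1 and ℓ(t) = R, and let n be the number of sites t with 1 ≤ t ≤ y and ℓ(t) = L. Then the rotor walk in [x, y] started at 0 stops at x−1 if m < n, or if m = n and ℓ(0) = L; and it stops at y+1 if m > n, or if m = n and ℓ(0) = R. -/
/-!
For a particle at `s` with labeling `ℓ`, the balance "number of `R`s in `[x, s]` minus number of
`L`s in `[s + 1, y]`" is unchanged by every step that keeps the particle in `[x, y]`. The walk can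
only leave to the left from `x` with `ℓ x = L`, where the balance is `≤ 0`, and to the right from
`y` with `ℓ y = R`, where it is `> 0`; at the start the balance is `m - n` plus one if `ℓ 0 = R`.
The walk does leave: each step inside `[x, y]` decreases, lexicographically, the number of rotors
pointing towards the particle and then the distance to the wall the particle is heading for.
-/

/-- One step of the one-dimensional rotor walk: a particle at site `t` moves right if the
label there is `R` (`true`) and left if it is `L` (`false`), and the label at `t` is flipped. -/
def walkStep : ℤ × (ℤ → Bool) → ℤ × (ℤ → Bool)
  | (t, ℓ) => ((if ℓ t then t + 1 else t - 1), Function.update ℓ t (!ℓ t))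

/-- The stopping time of the rotor walk in `[x, y]` started at `0`: the first time the
particle is outside `[x, y]`. -/
noncomputable def stopTime (x y : ℤ) (ℓ : ℤ → Bool) : ℕ :=
  sInf {n | (walkStep^[n] (0, ℓ)).1 ∉ Set.Icc x y}

/-- The stopping position of the rotor walk in `[x, y]` started at `0`. -/
noncomputable def stopPos (x y : ℤ) (ℓ : ℤ → Bool) : ℤ :=
  (walkStep^[stopTime x y ℓ] (0, ℓ)).1

open Function

noncomputable section

def labelCount (ℓ : ℤ → Bool) (b : Bool) (a c : ℤ) : ℕ :=
  ((Finset.Icc a c).filter (fun t => ℓ t = b)).card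

section labelCount

variable {ℓ : ℤ → Bool} {b : Bool} {a c : ℤ}

lemma labelCount_eq_zero_of_lt (h : c < a) : labelCount ℓ b a c = 0 := by
  simp [labelCount, Finset.Icc_eq_empty_of_lt h]

lemma labelCount_eq_add_right (h : a ≤ c) :
    labelCount ℓ b a c = labelCount ℓ b a (c - 1) + if ℓ c = b then 1 else 0 := by
  have hIcc : Finset.Icc a c = insert c (Finset.Icc a (c - 1)) := by
    ext t; simp only [Finset.mem_Icc, Finset.mem_insert]; omega
  rw [labelCount, hIcc, Finset.filter_insert]
  split_ifs
  · exact Finset.card_insert_of_notMem (by simp)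
  · rfl

lemma labelCount_eq_add_left (h : a ≤ c) :
    labelCount ℓ b a c = (if ℓ a = b then 1 else 0) + labelCount ℓ b (a + 1) c := by
  have hIcc : Finset.Icc a c = insert a (Finset.Icc (a + 1) c) := by
    ext t; simp only [Finset.mem_Icc, Finset.mem_insert]; omega
  rw [labelCount, hIcc, Finset.filter_insert]
  split_ifs
  · rw [Finset.card_insert_of_notMem (by simp), add_comm]; rfl
  · rw [zero_add]; rfl

lemma labelCount_update_of_notMem {s : ℤ} (hs : s < a ∨ c < s) (v : Bool) :
    labelCount (update ℓ s v) b a c = labelCount ℓ b a c := by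
  refine congrArg Finset.card (Finset.filter_congr fun t ht => ?_)
  rw [update_of_ne (by rw [Finset.mem_Icc] at ht; omega)]

end labelCount

lemma walkStep_of_true {s : ℤ} {ℓ : ℤ → Bool} (h : ℓ s = true) :
    walkStep (s, ℓ) = (s + 1, update ℓ s false) := by
  simp [walkStep, h]

lemma walkStep_of_false {s : ℤ} {ℓ : ℤ → Bool} (h : ℓ s = false) :
    walkStep (s, ℓ) = (s - 1, update ℓ s true) := by
  simp [walkStep, h]

inductive Exits (x y : ℤ) : ℤ × (ℤ → Bool) → ℤ → Prop
  | outside {p} : p.1 ∉ Set.Icc x y → Exits x y p p.1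
  | step {p z} : p.1 ∈ Set.Icc x y → Exits x y (walkStep p) z → Exits x y p z

lemma Exits.exists_iterate {x y z : ℤ} {p : ℤ × (ℤ → Bool)} (h : Exits x y p z) :
    ∃ k, (walkStep^[k] p).1 = z ∧ z ∉ Set.Icc x y ∧
      ∀ j < k, (walkStep^[j] p).1 ∈ Set.Icc x y := by
  induction h with
  | outside hout => exact ⟨0, rfl, hout, by simp⟩
  | step hin _ ih =>
    obtain ⟨k, hk, hz, hbefore⟩ := ih
    refine ⟨k + 1, hk, hz, fun j hj => ?_⟩
    rcases j with _ | j
    · exact hin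
    · exact hbefore j (by omega)

lemma stopPos_eq_of_exits {x y z : ℤ} {ℓ : ℤ → Bool} (h : Exits x y (0, ℓ) z) :
    stopPos x y ℓ = z := by
  obtain ⟨k, rfl, hz, hbefore⟩ := h.exists_iterate
  have hk : stopTime x y ℓ = k :=
    le_antisymm (Nat.sInf_le hz)
      (le_csInf ⟨k, hz⟩ fun j hj => not_lt.1 fun hjk => hj (hbefore j hjk))
  rw [stopPos, hk]

section Walk

variable {x y s : ℤ} {ℓ : ℤ → Bool}

def balance (x y : ℤ) : ℤ × (ℤ → Bool) → ℤ
  | (s, ℓ) => labelCount ℓ true x (s - 1) + (if ℓ s then 1 else 0) - labelCount ℓ false (s + 1) y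

def progress (x y : ℤ) : ℤ × (ℤ → Bool) → ℕ ×ₗ ℕ
  | (s, ℓ) => toLex (labelCount ℓ true x (s - 1) + labelCount ℓ false (s + 1) y,
      (if ℓ s then y - s else s - x).toNat)

def exitSite (x y : ℤ) (p : ℤ × (ℤ → Bool)) : ℤ :=
  if balance x y p ≤ 0 then x - 1 else y + 1

lemma balance_walkStep_eq_and_progress_lt_of_true (hxs : x ≤ s) (hsy : s < y) (h : ℓ s = true) :
    balance x y (walkStep (s, ℓ)) = balance x y (s, ℓ) ∧
      progress x y (walkStep (s, ℓ)) < progress x y (s, ℓ) := by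
  have hM : labelCount (update ℓ s false) true x (s + 1 - 1) = labelCount ℓ true x (s - 1) := by
    rw [add_sub_cancel_right, labelCount_eq_add_right hxs, labelCount_update_of_notMem (by omega)]
    simp
  have hN : labelCount ℓ false (s + 1) y =
      (if ℓ (s + 1) = false then 1 else 0) + labelCount (update ℓ s false) false (s + 1 + 1) y := by
    rw [labelCount_eq_add_left (by omega), labelCount_update_of_notMem (by omega)]
  have hnext : update ℓ s false (s + 1) = ℓ (s + 1) := update_of_ne (by omega) _ _
  simp only [walkStep_of_true h, balance, progress, hM, hN, hnext, h, Prod.Lex.toLex_lt_toLex]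
  cases ℓ (s + 1) <;> simp <;> omega

lemma balance_walkStep_eq_and_progress_lt_of_false (hxs : x < s) (hsy : s ≤ y) (h : ℓ s = false) :
    balance x y (walkStep (s, ℓ)) = balance x y (s, ℓ) ∧
      progress x y (walkStep (s, ℓ)) < progress x y (s, ℓ) := by
  have hN : labelCount (update ℓ s true) false (s - 1 + 1) y = labelCount ℓ false (s + 1) y := by
    rw [sub_add_cancel, labelCount_eq_add_left hsy, labelCount_update_of_notMem (by omega)]
    simp
  have hM : labelCount ℓ true x (s - 1) =
      labelCount (update ℓ s true) true x (s - 1 - 1) + (if ℓ (s - 1) = true then 1 else 0) := by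
    rw [labelCount_eq_add_right (by omega), labelCount_update_of_notMem (by omega)]
  have hnext : update ℓ s true (s - 1) = ℓ (s - 1) := update_of_ne (by omega) _ _
  simp only [walkStep_of_false h, balance, progress, hM, hN, hnext, h, Prod.Lex.toLex_lt_toLex]
  cases ℓ (s - 1) <;> simp
  omega

lemma balance_nonpos_of_false (h : ℓ x = false) : balance x y (x, ℓ) ≤ 0 := by
  simp [balance, h, labelCount_eq_zero_of_lt (sub_one_lt x)]

lemma balance_pos_of_true (h : ℓ y = true) : 0 < balance x y (y, ℓ) := by
  simp [balance, h, labelCount_eq_zero_of_lt (lt_add_one y)]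

lemma walkStep_exits_or_progresses {p : ℤ × (ℤ → Bool)} (hp : p.1 ∈ Set.Icc x y) :
    ((walkStep p).1 ∉ Set.Icc x y ∧ (walkStep p).1 = exitSite x y p) ∨
      ((walkStep p).1 ∈ Set.Icc x y ∧ exitSite x y (walkStep p) = exitSite x y p ∧
        progress x y (walkStep p) < progress x y p) := by
  obtain ⟨s, ℓ⟩ := p
  obtain ⟨hxs, hsy⟩ := hp
  cases h : ℓ s
  · rcases hxs.lt_or_eq with hxs | rfl
    · obtain ⟨hbal, hlt⟩ := balance_walkStep_eq_and_progress_lt_of_false hxs hsy h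
      refine .inr ⟨?_, by rw [exitSite, exitSite, hbal], hlt⟩
      rw [walkStep_of_false h]; constructor <;> omega
    · refine .inl ⟨?_, ?_⟩ <;>
        simp [walkStep_of_false h, exitSite, balance_nonpos_of_false (y := y) h]
  · rcases hsy.lt_or_eq with hsy | rfl
    · obtain ⟨hbal, hlt⟩ := balance_walkStep_eq_and_progress_lt_of_true hxs hsy h
      refine .inr ⟨?_, by rw [exitSite, exitSite, hbal], hlt⟩
      rw [walkStep_of_true h]; constructor <;> omega
    · refine .inl ⟨?_, ?_⟩ <;>
        simp [walkStep_of_true h, exitSite, (balance_pos_of_true (x := x) h).not_ge]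

theorem exits_exitSite (p : ℤ × (ℤ → Bool)) (hp : p.1 ∈ Set.Icc x y) :
    Exits x y p (exitSite x y p) := by
  induction p using (InvImage.wf (progress x y) wellFounded_lt).induction with
  | h p ih =>
    refine Exits.step hp ?_
    rcases walkStep_exits_or_progresses hp with ⟨hout, hsite⟩ | ⟨hin, hsite, hlt⟩
    · exact hsite ▸ Exits.outside hout
    · exact hsite ▸ ih _ hlt hin

end Walk

end

/-- Let `x ≤ 0 ≤ y`, let `m` be the number of sites in `[x, −1]` labeled `R` and `n` the
number of sites in `[1, y]` labeled `L`.  The rotor walk in `[x, y]` started at `0` stops at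
`x − 1` if `m < n`, or if `m = n` and the origin is labeled `L`; and it stops at `y + 1` if
`m > n`, or if `m = n` and the origin is labeled `R`. -/
theorem rotor_walk_zigzag (x y : ℤ) (hx : x ≤ 0) (hy : 0 ≤ y) (ℓ : ℤ → Bool)
    (m n : ℕ)
    (hm : m = ((Finset.Icc x (-1)).filter (fun t => ℓ t = true)).card)
    (hn : n = ((Finset.Icc 1 y).filter (fun t => ℓ t = false)).card) :
    ((m < n ∨ (m = n ∧ ℓ 0 = false)) → stopPos x y ℓ = x - 1) ∧
    ((n < m ∨ (m = n ∧ ℓ 0 = true)) → stopPos x y ℓ = y + 1) := by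
  have hbal : balance x y (0, ℓ) = m + (if ℓ 0 then 1 else 0) - n := by
    simp [balance, labelCount, hm, hn]
  have hstop : stopPos x y ℓ = if balance x y (0, ℓ) ≤ 0 then x - 1 else y + 1 :=
    stopPos_eq_of_exits (exits_exitSite (0, ℓ) ⟨hx, hy⟩)
  rw [hstop, hbal]
  cases ℓ 0 <;> simp <;> omega
end

section
/- The set Rec is closed under f_{r,s}: if σ ∈ Rec then f_{r,s}(σ) ∈ Rec. Moreover, for every state σ of the one-dimensional rotor-router model there exists an integer N ≥ 0 such that f_{r,s}^N(σ) ∈ Rec. -/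
/-- A state of the one-dimensional rotor-router model: the occupied interval `[x, y]`
(with `x ≤ 0 ≤ y`) together with a labeling of the sites. -/
structure RState where
  x : ℤ
  y : ℤ
  lab : ℤ → Bool

/-- The equilibration map `f_{r,s}`: run the rotor walk in `[x, y]` from `0` until it stops,
then extend the interval by `r` sites on the left if the walk stopped at `x − 1`, and by `s`
sites on the right if it stopped at `y + 1`, labeling the newly occupied sites `R`. -/
noncomputable def equil (r s : ℤ) (σ : RState) : RState :=
  let N := sInf {n | (walkStep^[n] (0, σ.lab)).1 ∉ Set.Icc σ.x σ.y}
  let c := walkStep^[N] (0, σ.lab)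
  if c.1 < σ.x then
    ⟨σ.x - r, σ.y, fun t => if σ.x - r ≤ t ∧ t ≤ σ.x - 1 then true else c.2 t⟩
  else
    ⟨σ.x, σ.y + s, fun t => if σ.y + 1 ≤ t ∧ t ≤ σ.y + s then true else c.2 t⟩

/-- A state is recurrent (in `Rec(x, y)`) if its interval is `[x, y+s−1]` with `x ≤ 0 ≤ y`
and its labels have the form `RⁱLʲRˢ` on this interval. -/
def IsRec (s : ℤ) (σ : RState) : Prop :=
  ∃ x y : ℤ, x ≤ 0 ∧ 0 ≤ y ∧ σ.x = x ∧ σ.y = y + s - 1 ∧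
    ∃ i : ℤ, 0 ≤ i ∧ i ≤ y - x + 1 ∧
      (∀ t, x ≤ t → t ≤ x + i - 1 → σ.lab t = true) ∧
      (∀ t, x + i ≤ t → t ≤ y - 1 → σ.lab t = false) ∧
      (∀ t, y ≤ t → t ≤ y + s - 1 → σ.lab t = true)

lemma walkStep_def (p : ℤ) (ℓ : ℤ → Bool) :
    walkStep (p, ℓ) = ((if ℓ p then p + 1 else p - 1), Function.update ℓ p (!ℓ p)) := rfl
lemma walk_pos_step (c : ℤ × (ℤ → Bool)) :
    (walkStep c).1 = c.1 + 1 ∨ (walkStep c).1 = c.1 - 1 := by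
  obtain ⟨p, ℓ⟩ := c; rw [walkStep_def]; by_cases h : ℓ p <;> simp [h]
lemma walk_lab_step (c : ℤ × (ℤ → Bool)) (t : ℤ) (h : t ≠ c.1) :
    (walkStep c).2 t = c.2 t := by
  obtain ⟨p, ℓ⟩ := c; rw [walkStep_def]; exact Function.update_of_ne h _ _
lemma walk_pos_of_true (c : ℤ × (ℤ → Bool)) (h : c.2 c.1 = true) :
    (walkStep c).1 = c.1 + 1 := by
  obtain ⟨p, ℓ⟩ := c; simp only at h; rw [walkStep_def]; simp [h]
lemma walk_pos_of_false (c : ℤ × (ℤ → Bool)) (h : c.2 c.1 = false) :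
    (walkStep c).1 = c.1 - 1 := by
  obtain ⟨p, ℓ⟩ := c; simp only at h; rw [walkStep_def]; simp [h]
lemma walk_lab_flip (c : ℤ × (ℤ → Bool)) : (walkStep c).2 c.1 = !c.2 c.1 := by
  obtain ⟨p, ℓ⟩ := c; rw [walkStep_def]; simp

lemma ivt_up (w : ℕ → ℤ) (hw : ∀ n, w (n+1) = w n + 1 ∨ w (n+1) = w n - 1) :
    ∀ (b a : ℕ) (t : ℤ), a ≤ b → w a ≤ t → t ≤ w b → ∃ n, a ≤ n ∧ n ≤ b ∧ w n = t := by
  intro b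
  induction b with
  | zero =>
    intro a t hab h1 h2
    have ha : a = 0 := by omega
    subst ha
    exact ⟨0, le_rfl, le_rfl, by omega⟩
  | succ b ih =>
    intro a t hab h1 h2
    by_cases hab' : a ≤ b
    · by_cases ht : t ≤ w b
      · obtain ⟨n, h⟩ := ih a t hab' h1 ht
        exact ⟨n, h.1, by omega, h.2.2⟩
      · refine ⟨b + 1, by omega, le_rfl, ?_⟩
        rcases hw b with h | h <;> omega
    · have ha : a = b + 1 := by omega
      subst ha
      exact ⟨b + 1, le_rfl, le_rfl, by omega⟩

lemma ivt_down (w : ℕ → ℤ) (hw : ∀ n, w (n+1) = w n + 1 ∨ w (n+1) = w n - 1)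
    (a b : ℕ) (t : ℤ) (hab : a ≤ b) (h1 : t ≤ w a) (h2 : w b ≤ t) :
    ∃ n, a ≤ n ∧ n ≤ b ∧ w n = t := by
  obtain ⟨n, hn1, hn2, hn3⟩ := ivt_up (fun n => -w n)
    (fun n => by rcases hw n with h | h <;> [right; left] <;> simp [h] <;> ring)
    b a (-t) hab (by show -w a ≤ -t; omega) (by show -t ≤ -w b; omega)
  have hn3' : -w n = -t := hn3
  exact ⟨n, hn1, hn2, by omega⟩

lemma lab_unchanged (p : ℤ) (ℓ : ℤ → Bool) (t : ℤ) :
    ∀ (k : ℕ), (∀ j < k, (walkStep^[j] (p, ℓ)).1 ≠ t) → (walkStep^[k] (p, ℓ)).2 t = ℓ t := by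
  intro k
  induction k with
  | zero => intro _; rfl
  | succ k ih =>
    intro h
    rw [Function.iterate_succ_apply', walk_lab_step _ _ (Ne.symm (h k (by omega)))]
    exact ih (fun j hj => h j (by omega))

lemma escape_aux : ∀ (n : ℕ) (x y p : ℤ) (ℓ : ℤ → Bool), y - x < n → x ≤ p → p ≤ y →
    ∃ k, (walkStep^[k] (p, ℓ)).1 ∉ Set.Icc x y := by
  intro n
  induction n with
  | zero => intro x y p ℓ h1 h2 h3; omega
  | succ n ih =>
    intro x y p ℓ hn hxp hpy
    have sub : ∀ (p' : ℤ) (ℓ' : ℤ → Bool), x ≤ p' → p' ≤ y - 1 →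
        ∃ k, (walkStep^[k] (p', ℓ')).1 = x - 1 ∨
          ((walkStep^[k] (p', ℓ')).1 = y ∧ (walkStep^[k] (p', ℓ')).2 y = ℓ' y) := by
      intro p' ℓ' h1 h2
      have hesc : {k : ℕ | (walkStep^[k] (p', ℓ')).1 ∉ Set.Icc x (y - 1)}.Nonempty :=
        ih x (y - 1) p' ℓ' (by omega) h1 h2
      set K := sInf {k : ℕ | (walkStep^[k] (p', ℓ')).1 ∉ Set.Icc x (y - 1)} with hK
      have hkspec : (walkStep^[K] (p', ℓ')).1 ∉ Set.Icc x (y - 1) := Nat.sInf_mem hesc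
      have hkmin : ∀ j < K, (walkStep^[j] (p', ℓ')).1 ∈ Set.Icc x (y - 1) := by
        intro j hj
        have := Nat.notMem_of_lt_sInf (hK ▸ hj)
        simpa using this
      have hk0 : K ≠ 0 := by
        intro h0
        rw [h0] at hkspec
        exact hkspec ⟨h1, h2⟩
      obtain ⟨k', hk'⟩ : ∃ k', K = k' + 1 := ⟨K - 1, by omega⟩
      rw [hk'] at hkspec
      have hprev := hkmin k' (by omega)
      simp only [Set.mem_Icc] at hprev hkspec
      have hstep := walk_pos_step (walkStep^[k'] (p', ℓ'))
      rw [show walkStep (walkStep^[k'] (p', ℓ')) = walkStep^[k' + 1] (p', ℓ') from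
        (Function.iterate_succ_apply' _ _ _).symm] at hstep
      refine ⟨k' + 1, ?_⟩
      have hy : ∀ j < k' + 1, (walkStep^[j] (p', ℓ')).1 ≠ y := by
        intro j hj
        have := hkmin j (by omega)
        simp only [Set.mem_Icc] at this
        omega
      rcases hstep with h | h
      · by_cases hcase : (walkStep^[k' + 1] (p', ℓ')).1 = y
        · exact Or.inr ⟨hcase, lab_unchanged _ _ _ _ hy⟩
        · exact Or.inl (by omega)
      · exact Or.inl (by omega)
    have aty : ∀ ℓ' : ℤ → Bool, ∃ k, (walkStep^[k] (y, ℓ')).1 ∉ Set.Icc x y := by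
      intro ℓ'
      by_cases hl : ℓ' y
      · refine ⟨1, ?_⟩
        simp only [Function.iterate_one, walkStep_def, hl, if_pos]
        simp only [Set.mem_Icc]
        omega
      · have hstep1 : walkStep (y, ℓ') = (y - 1, Function.update ℓ' y true) := by
          rw [walkStep_def]
          simp [hl]
        by_cases hxy : x ≤ y - 1
        · obtain ⟨k, hk⟩ := sub (y - 1) (Function.update ℓ' y true) hxy le_rfl
          rcases hk with hk | ⟨hk1, hk2⟩
          · refine ⟨k + 1, ?_⟩
            rw [Function.iterate_succ_apply, hstep1, Set.mem_Icc]
            omega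
          · refine ⟨k + 1 + 1, ?_⟩
            rw [Function.iterate_succ_apply _ (k+1), hstep1, Function.iterate_succ_apply']
            have hctrue : (walkStep^[k] (y - 1, Function.update ℓ' y true)).2
                (walkStep^[k] (y - 1, Function.update ℓ' y true)).1 = true := by
              rw [hk1, hk2, Function.update_self]
            rw [Set.mem_Icc, walk_pos_of_true _ hctrue, hk1]
            omega
        · refine ⟨1, ?_⟩
          rw [Function.iterate_one, hstep1, Set.mem_Icc]
          simp only
          omega
    by_cases hp : p ≤ y - 1
    · obtain ⟨k, hk⟩ := sub p ℓ hxp hp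
      rcases hk with hk | ⟨hk1, _⟩
      · exact ⟨k, by simp only [Set.mem_Icc]; omega⟩
      · obtain ⟨k₂, hk₂⟩ := aty (walkStep^[k] (p, ℓ)).2
        refine ⟨k₂ + k, ?_⟩
        rw [Function.iterate_add_apply]
        have hpair : (y, (walkStep^[k] (p, ℓ)).2) = walkStep^[k] (p, ℓ) := by
          rw [← hk1]
        rw [← hpair]
        exact hk₂
    · have hpy' : p = y := by omega
      subst hpy'
      exact aty ℓ

lemma rightRun : ∀ (n : ℕ) (p : ℤ) (ℓ : ℤ → Bool),
    (∀ t, p ≤ t → t < p + n → ℓ t = true) →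
    walkStep^[n] (p, ℓ) = (p + n, fun t => if p ≤ t ∧ t < p + n then false else ℓ t) := by
  intro n
  induction n with
  | zero =>
    intro p ℓ _
    simp only [Function.iterate_zero_apply, Nat.cast_zero, add_zero]
    refine Prod.ext rfl ?_
    funext t
    simp only
    rw [if_neg (by omega)]
  | succ n ih =>
    intro p ℓ h
    have hp : ℓ p = true := h p le_rfl (by push_cast; omega)
    rw [Function.iterate_succ_apply, walkStep_def, hp, if_pos rfl]
    rw [ih (p + 1) _ (fun t ht1 ht2 => by
      rw [Function.update_of_ne (by omega)]
      exact h t (by omega) (by push_cast at ht2 ⊢; omega))]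
    refine Prod.ext (by simp; push_cast; ring) ?_
    funext t
    simp only
    by_cases h1 : p + 1 ≤ t ∧ t < p + 1 + n
    · rw [if_pos h1, if_pos (by push_cast at h1 ⊢; omega)]
    · rw [if_neg h1]
      by_cases h2 : t = p
      · subst h2
        rw [Function.update_self, if_pos (by push_cast; omega)]
        simp [hp]
      · rw [Function.update_of_ne h2, if_neg (by push_cast at h1 ⊢; omega)]

lemma leftRun : ∀ (n : ℕ) (p : ℤ) (ℓ : ℤ → Bool),
    (∀ t, p - n < t → t ≤ p → ℓ t = false) →
    walkStep^[n] (p, ℓ) = (p - n, fun t => if p - n < t ∧ t ≤ p then true else ℓ t) := by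
  intro n
  induction n with
  | zero =>
    intro p ℓ _
    simp only [Function.iterate_zero_apply, Nat.cast_zero, sub_zero]
    refine Prod.ext rfl ?_
    funext t
    simp only
    rw [if_neg (by omega)]
  | succ n ih =>
    intro p ℓ h
    have hp : ℓ p = false := h p (by push_cast; omega) le_rfl
    rw [Function.iterate_succ_apply, walkStep_def, hp]
    simp only [if_neg (by simp : ¬(false = true)), Bool.not_false]
    rw [ih (p - 1) _ (fun t ht1 ht2 => by
      rw [Function.update_of_ne (by omega)]
      exact h t (by push_cast at ht1 ⊢; omega) (by omega))]
    refine Prod.ext (by simp; push_cast; ring) ?_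
    funext t
    simp only
    by_cases h1 : p - 1 - n < t ∧ t ≤ p - 1
    · rw [if_pos h1, if_pos (by push_cast at h1 ⊢; omega)]
    · rw [if_neg h1]
      by_cases h2 : t = p
      · subst h2
        rw [Function.update_self, if_pos (by push_cast; omega)]
      · rw [Function.update_of_ne h2, if_neg (by push_cast at h1 ⊢; omega)]

lemma equil_cases (r s : ℤ) (hr : 0 < r) (hs : 0 < s) (σ : RState)
    (hx : σ.x ≤ 0) (hy : 0 ≤ σ.y) :
    (∃ m, σ.x ≤ m ∧ m ≤ 0 ∧ (equil r s σ).x = σ.x ∧ (equil r s σ).y = σ.y + s ∧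
      (∀ t, t < m → (equil r s σ).lab t = σ.lab t) ∧
      (∀ t, m ≤ t → t ≤ σ.y → (equil r s σ).lab t = false) ∧
      (∀ t, σ.y < t → t ≤ σ.y + s → (equil r s σ).lab t = true) ∧
      (∀ t, σ.y + s < t → (equil r s σ).lab t = σ.lab t) ∧
      (∀ c, σ.x ≤ c → c ≤ 0 → (∀ t, c ≤ t → t ≤ 0 → σ.lab t = false) → m ≤ c - 1)) ∨
    (∃ M, 0 ≤ M ∧ M ≤ σ.y ∧ (equil r s σ).x = σ.x - r ∧ (equil r s σ).y = σ.y ∧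
      (∀ t, t < σ.x - r → (equil r s σ).lab t = σ.lab t) ∧
      (∀ t, σ.x - r ≤ t → t ≤ M → (equil r s σ).lab t = true) ∧
      (∀ t, M < t → (equil r s σ).lab t = σ.lab t) ∧
      (∀ M₀, 0 ≤ M₀ → (∀ t, 0 ≤ t → t ≤ M₀ → σ.lab t = true) → M₀ + 1 ≤ M)) := by
  have hSne : {n : ℕ | (walkStep^[n] (0, σ.lab)).1 ∉ Set.Icc σ.x σ.y}.Nonempty :=
    escape_aux (σ.y - σ.x + 1).toNat σ.x σ.y 0 σ.lab (by omega) hx hy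
  set S := {n : ℕ | (walkStep^[n] (0, σ.lab)).1 ∉ Set.Icc σ.x σ.y} with hS
  set N := sInf S with hN
  have hef : equil r s σ =
      if (walkStep^[N] (0, σ.lab)).1 < σ.x then
        (⟨σ.x - r, σ.y, fun t => if σ.x - r ≤ t ∧ t ≤ σ.x - 1 then true
          else (walkStep^[N] (0, σ.lab)).2 t⟩ : RState)
      else
        ⟨σ.x, σ.y + s, fun t => if σ.y + 1 ≤ t ∧ t ≤ σ.y + s then true
          else (walkStep^[N] (0, σ.lab)).2 t⟩ := rfl
  have hNmem : N ∈ S := Nat.sInf_mem hSne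
  set w : ℕ → ℤ := fun n => (walkStep^[n] (0, σ.lab)).1 with hw
  have hNmin : ∀ j, j < N → σ.x ≤ w j ∧ w j ≤ σ.y := by
    intro j hj
    have h2 := Nat.notMem_of_lt_sInf (hN ▸ hj)
    rw [hS] at h2
    simp only [Set.mem_setOf_eq, Set.mem_Icc, not_not] at h2
    exact h2
  have hwstep : ∀ n, w (n+1) = w n + 1 ∨ w (n+1) = w n - 1 := by
    intro n
    show (walkStep^[n+1] (0, σ.lab)).1 = _ ∨ (walkStep^[n+1] (0, σ.lab)).1 = _
    rw [Function.iterate_succ_apply']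
    exact walk_pos_step _
  have hw0 : w 0 = 0 := rfl
  have hN0 : N ≠ 0 := by
    intro h0
    have h1 := hNmem
    rw [h0, hS] at h1
    simp only [Set.mem_setOf_eq, Set.mem_Icc] at h1
    exact h1 ⟨hx, hy⟩
  obtain ⟨N', hNs⟩ : ∃ N', N = N' + 1 := ⟨N - 1, by omega⟩
  have hprev := hNmin N' (by omega)
  have hwNs : w N ∉ Set.Icc σ.x σ.y := by
    have h1 := hNmem
    rw [hS] at h1
    exact h1
  rw [Set.mem_Icc] at hwNs
  have hstepN := hwstep N'
  rw [← hNs] at hstepN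
  have hNbd : w N = σ.x - 1 ∨ w N = σ.y + 1 := by omega
  have hNrange : (Finset.range N).Nonempty := Finset.nonempty_range_iff.mpr hN0
  set ℓN : ℤ → Bool := (walkStep^[N] (0, σ.lab)).2 with hℓN
  have hunvis : ∀ t : ℤ, (∀ j, j < N → w j ≠ t) → ℓN t = σ.lab t := by
    intro t h
    exact lab_unchanged 0 σ.lab t N h
  have hpersist : ∀ (t : ℤ) (n₀ : ℕ), n₀ < N → (∀ j, n₀ < j → j < N → w j ≠ t) →
      w n₀ = t → ℓN t = !(walkStep^[n₀] (0, σ.lab)).2 t := by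
    intro t n₀ hn₀ hafter hwn₀
    have hflip : (walkStep^[n₀ + 1] (0, σ.lab)).2 t = !(walkStep^[n₀] (0, σ.lab)).2 t := by
      rw [Function.iterate_succ_apply']
      have h1 := walk_lab_flip (walkStep^[n₀] (0, σ.lab))
      rw [show (walkStep^[n₀] (0, σ.lab)).1 = t from hwn₀] at h1
      exact h1
    have hsteady : ∀ k, n₀ + 1 ≤ k → k ≤ N →
        (walkStep^[k] (0, σ.lab)).2 t = !(walkStep^[n₀] (0, σ.lab)).2 t := by
      intro k
      induction k with
      | zero => intro h1 _; omega
      | succ k ih =>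
        intro hk1 hk2
        by_cases hk : n₀ + 1 ≤ k
        · rw [Function.iterate_succ_apply', walk_lab_step]
          · exact ih hk (by omega)
          · exact Ne.symm (hafter k (by omega) (by omega))
        · have hkn : k = n₀ := by omega
          subst hkn
          exact hflip
    exact hsteady N (by omega) le_rfl
  rcases hNbd with hexit | hexit
  · -- LEFT EXIT
    right
    have hnotlt : (walkStep^[N] (0, σ.lab)).1 < σ.x := by
      have h1 : w N = (walkStep^[N] (0, σ.lab)).1 := rfl
      omega
    rw [hef, if_pos hnotlt]
    set M := (Finset.range N).sup' hNrange w with hM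
    have hM0 : 0 ≤ M := by
      have h1 : w 0 ≤ M := Finset.le_sup' w (Finset.mem_range.mpr (by omega))
      omega
    have hMy : M ≤ σ.y := by
      apply Finset.sup'_le
      intro j hj
      exact (hNmin j (Finset.mem_range.mp hj)).2
    obtain ⟨jM, hjMmem, hjMw⟩ := Finset.exists_mem_eq_sup' hNrange w
    have hjMN : jM < N := Finset.mem_range.mp hjMmem
    have hwN' : w N' = σ.x := by omega
    have hvis : ∀ t, σ.x ≤ t → t ≤ M → ∃ j, j < N ∧ w j = t := by
      intro t ht1 ht2
      obtain ⟨j, hj1, hj2, hj3⟩ := ivt_down w hwstep jM N' t (by omega) (by omega) (by omega)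
      exact ⟨j, by omega, hj3⟩
    have hlabtrue : ∀ t, σ.x ≤ t → t ≤ M → ℓN t = true := by
      intro t ht1 ht2
      obtain ⟨j₀, hj₀N, hj₀⟩ := hvis t ht1 ht2
      obtain ⟨nst, hnstN, hnstw, hmax⟩ : ∃ n, n < N ∧ w n = t ∧ ∀ j, j < N → w j = t → j ≤ n := by
        have hFne : ((Finset.range N).filter (fun j => w j = t)).Nonempty :=
          ⟨j₀, by rw [Finset.mem_filter, Finset.mem_range]; exact ⟨hj₀N, hj₀⟩⟩
        have hmem := Finset.max'_mem _ hFne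
        rw [Finset.mem_filter, Finset.mem_range] at hmem
        exact ⟨_, hmem.1, hmem.2, fun j h1 h2 => Finset.le_max' _ j
          (by rw [Finset.mem_filter, Finset.mem_range]; exact ⟨h1, h2⟩)⟩
      have hlabst : (walkStep^[nst] (0, σ.lab)).2 t = false := by
        by_contra hcon
        rw [Bool.not_eq_false] at hcon
        have hmove : w (nst + 1) = t + 1 := by
          show (walkStep^[nst + 1] (0, σ.lab)).1 = t + 1
          rw [Function.iterate_succ_apply']
          have h1 := walk_pos_of_true (walkStep^[nst] (0, σ.lab))
            (by rw [show (walkStep^[nst] (0, σ.lab)).1 = t from hnstw]; exact hcon)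
          rw [show (walkStep^[nst] (0, σ.lab)).1 = t from hnstw] at h1
          exact h1
        obtain ⟨j, hj1, hj2, hj3⟩ := ivt_down w hwstep (nst + 1) N t
          (by omega) (by omega) (by omega)
        have hjN : j < N := by
          rcases Nat.lt_or_ge j N with h | h
          · exact h
          · exfalso
            have hjn : j = N := by omega
            subst hjn
            omega
        have := hmax j hjN hj3
        omega
      have h2 := hpersist t nst hnstN
        (fun j h1 h2 hc => by have := hmax j h2 hc; omega) hnstw
      rw [h2, hlabst]
      rfl
    refine ⟨M, hM0, hMy, rfl, rfl, ?_, ?_, ?_, ?_⟩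
    · intro t ht
      show (if σ.x - r ≤ t ∧ t ≤ σ.x - 1 then true else ℓN t) = σ.lab t
      rw [if_neg (by omega)]
      apply hunvis
      intro j hj hc
      have := (hNmin j hj).1
      omega
    · intro t ht1 ht2
      show (if σ.x - r ≤ t ∧ t ≤ σ.x - 1 then true else ℓN t) = true
      by_cases hcase : t ≤ σ.x - 1
      · rw [if_pos ⟨ht1, hcase⟩]
      · rw [if_neg (by omega)]
        exact hlabtrue t (by omega) ht2
    · intro t ht
      show (if σ.x - r ≤ t ∧ t ≤ σ.x - 1 then true else ℓN t) = σ.lab t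
      rw [if_neg (by omega)]
      apply hunvis
      intro j hj hc
      have h1 : w j ≤ M := Finset.le_sup' w (Finset.mem_range.mpr hj)
      omega
    · intro M₀ hM₀0 htrue
      have hrun : ∀ k : ℕ, (k : ℤ) ≤ M₀ + 1 → w k = k := by
        intro k hk
        show (walkStep^[k] (0, σ.lab)).1 = k
        rw [rightRun k 0 σ.lab (fun t h1 h2 => htrue t h1 (by omega))]
        simp
      set n₂ : ℕ := (M₀ + 1).toNat with hn₂def
      have hn₂' : (n₂ : ℤ) = M₀ + 1 := Int.toNat_of_nonneg (by omega)
      have hNn₂ : n₂ < N := by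
        rcases Nat.lt_or_ge n₂ N with h | h
        · exact h
        · exfalso
          have hwN2 : w N = N := hrun N (by omega)
          omega
      have h1 : w n₂ ≤ M := Finset.le_sup' w (Finset.mem_range.mpr hNn₂)
      have hwn₂ : w n₂ = n₂ := hrun n₂ (by omega)
      omega
  · -- RIGHT EXIT
    left
    have hnotlt : ¬ (walkStep^[N] (0, σ.lab)).1 < σ.x := by
      have h1 : w N = (walkStep^[N] (0, σ.lab)).1 := rfl
      omega
    rw [hef, if_neg hnotlt]
    set m := (Finset.range N).inf' hNrange w with hm
    have hm0 : m ≤ 0 := by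
      have h1 : m ≤ w 0 := Finset.inf'_le w (Finset.mem_range.mpr (by omega))
      omega
    have hxm : σ.x ≤ m := by
      apply Finset.le_inf'
      intro j hj
      exact (hNmin j (Finset.mem_range.mp hj)).1
    obtain ⟨jm, hjmmem, hjmw⟩ := Finset.exists_mem_eq_inf' hNrange w
    have hjmN : jm < N := Finset.mem_range.mp hjmmem
    have hwN' : w N' = σ.y := by omega
    have hvis : ∀ t, m ≤ t → t ≤ σ.y → ∃ j, j < N ∧ w j = t := by
      intro t ht1 ht2
      obtain ⟨j, hj1, hj2, hj3⟩ := ivt_up w hwstep N' jm t (by omega) (by omega) (by omega)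
      exact ⟨j, by omega, hj3⟩
    have hlabfalse : ∀ t, m ≤ t → t ≤ σ.y → ℓN t = false := by
      intro t ht1 ht2
      obtain ⟨j₀, hj₀N, hj₀⟩ := hvis t ht1 ht2
      obtain ⟨nst, hnstN, hnstw, hmax⟩ : ∃ n, n < N ∧ w n = t ∧ ∀ j, j < N → w j = t → j ≤ n := by
        have hFne : ((Finset.range N).filter (fun j => w j = t)).Nonempty :=
          ⟨j₀, by rw [Finset.mem_filter, Finset.mem_range]; exact ⟨hj₀N, hj₀⟩⟩
        have hmem := Finset.max'_mem _ hFne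
        rw [Finset.mem_filter, Finset.mem_range] at hmem
        exact ⟨_, hmem.1, hmem.2, fun j h1 h2 => Finset.le_max' _ j
          (by rw [Finset.mem_filter, Finset.mem_range]; exact ⟨h1, h2⟩)⟩
      have hlabst : (walkStep^[nst] (0, σ.lab)).2 t = true := by
        by_contra hcon
        rw [Bool.not_eq_true] at hcon
        have hmove : w (nst + 1) = t - 1 := by
          show (walkStep^[nst + 1] (0, σ.lab)).1 = t - 1
          rw [Function.iterate_succ_apply']
          have h1 := walk_pos_of_false (walkStep^[nst] (0, σ.lab))
            (by rw [show (walkStep^[nst] (0, σ.lab)).1 = t from hnstw]; exact hcon)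
          rw [show (walkStep^[nst] (0, σ.lab)).1 = t from hnstw] at h1
          exact h1
        obtain ⟨j, hj1, hj2, hj3⟩ := ivt_up w hwstep N (nst + 1) t
          (by omega) (by omega) (by omega)
        have hjN : j < N := by
          rcases Nat.lt_or_ge j N with h | h
          · exact h
          · exfalso
            have hjn : j = N := by omega
            subst hjn
            omega
        have := hmax j hjN hj3
        omega
      have h2 := hpersist t nst hnstN
        (fun j h1 h2 hc => by have := hmax j h2 hc; omega) hnstw
      rw [h2, hlabst]
      rfl
    refine ⟨m, hxm, hm0, rfl, rfl, ?_, ?_, ?_, ?_, ?_⟩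
    · intro t ht
      show (if σ.y + 1 ≤ t ∧ t ≤ σ.y + s then true else ℓN t) = σ.lab t
      rw [if_neg (by omega)]
      apply hunvis
      intro j hj hc
      have h1 : m ≤ w j := Finset.inf'_le w (Finset.mem_range.mpr hj)
      omega
    · intro t ht1 ht2
      show (if σ.y + 1 ≤ t ∧ t ≤ σ.y + s then true else ℓN t) = false
      rw [if_neg (by omega)]
      exact hlabfalse t ht1 ht2
    · intro t ht1 ht2
      show (if σ.y + 1 ≤ t ∧ t ≤ σ.y + s then true else ℓN t) = true
      rw [if_pos ⟨by omega, ht2⟩]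
    · intro t ht
      show (if σ.y + 1 ≤ t ∧ t ≤ σ.y + s then true else ℓN t) = σ.lab t
      rw [if_neg (by omega)]
      apply hunvis
      intro j hj hc
      have h1 := (hNmin j hj).2
      omega
    · intro c hc1 hc2 hfalse
      have hrun : ∀ k : ℕ, (k : ℤ) ≤ 1 - c → w k = -k := by
        intro k hk
        show (walkStep^[k] (0, σ.lab)).1 = -k
        rw [leftRun k 0 σ.lab (fun t h1 h2 => hfalse t (by omega) h2)]
        simp
      set n₁ : ℕ := (1 - c).toNat with hn₁def
      have hn₁' : (n₁ : ℤ) = 1 - c := Int.toNat_of_nonneg (by omega)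
      have hNn₁ : n₁ < N := by
        rcases Nat.lt_or_ge n₁ N with h | h
        · exact h
        · exfalso
          have hwN2 : w N = -N := hrun N (by omega)
          omega
      have h1 : m ≤ w n₁ := Finset.inf'_le w (Finset.mem_range.mpr hNn₁)
      have hwn₁ : w n₁ = -n₁ := hrun n₁ (by omega)
      omega
lemma rec_step (r s : ℤ) (hr : 0 < r) (hs : 0 < s) (σ : RState) (h : IsRec s σ) :
    IsRec s (equil r s σ) := by
  obtain ⟨x, y, hx0, hy0, hxx, hyy, i, hi0, hi1, hA, hB, hC⟩ := h
  rcases equil_cases r s hr hs σ (by omega) (by omega) with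
    ⟨m, hm1, hm2, hex, hey, hbelow, hfalse, htrue, habove, _⟩ |
    ⟨M, hM1, hM2, hex, hey, hbelow, htrue, habove, _⟩
  · -- right exit : Rec(x, y+s, min i (m - x))
    refine ⟨x, y + s, hx0, by omega, by omega, by omega, min i (m - x), by omega, by omega,
      ?_, ?_, ?_⟩
    · intro t ht1 ht2
      rw [hbelow t (by omega)]
      exact hA t ht1 (by omega)
    · intro t ht1 ht2
      by_cases hc : m ≤ t
      · exact hfalse t hc (by omega)
      · rw [hbelow t (by omega)]
        exact hB t (by omega) (by omega)
    · intro t ht1 ht2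
      exact htrue t (by omega) (by omega)
  · -- left exit
    by_cases hMy : y - 1 ≤ M
    · refine ⟨x - r, y, by omega, by omega, by omega, by omega, y - (x - r) + 1,
        by omega, by omega, ?_, ?_, ?_⟩
      · intro t ht1 ht2
        by_cases hc : t ≤ M
        · exact htrue t (by omega) hc
        · rw [habove t (by omega)]
          have ht : t = y := by omega
          subst ht
          exact hC t le_rfl (by omega)
      · intro t ht1 ht2
        omega
      · intro t ht1 ht2
        by_cases hc : t ≤ M
        · exact htrue t (by omega) hc
        · rw [habove t (by omega)]
          exact hC t ht1 (by omega)
    · refine ⟨x - r, y, by omega, by omega, by omega, by omega,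
        max (x + i - 1) M - (x - r) + 1, by omega, by omega, ?_, ?_, ?_⟩
      · intro t ht1 ht2
        by_cases hc : t ≤ M
        · exact htrue t (by omega) hc
        · rw [habove t (by omega)]
          exact hA t (by omega) (by omega)
      · intro t ht1 ht2
        rw [habove t (by omega)]
        exact hB t (by omega) (by omega)
      · intro t ht1 ht2
        rw [habove t (by omega)]
        exact hC t ht1 (by omega)

lemma propA (r s : ℤ) (hr : 0 < r) (hs : 0 < s) :
    ∀ (n : ℕ) (σ : RState) (c : ℤ), σ.x ≤ 0 → σ.x ≤ c → c ≤ 0 → c - σ.x ≤ n → s ≤ σ.y →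
    (∀ t, c ≤ t → t ≤ σ.y - s → σ.lab t = false) →
    (∀ t, σ.y - s < t → t ≤ σ.y → σ.lab t = true) →
    ∃ N : ℕ, IsRec s ((equil r s)^[N] σ) := by
  intro n
  induction n with
  | zero =>
    intro σ c hx hc1 hc2 hcn hsy hfal htru
    rcases equil_cases r s hr hs σ hx (by omega) with
      ⟨m, hm1, hm2, hex, hey, hbelow, hfalse, htrue, habove, hclause⟩ |
      ⟨M, hM1, hM2, hex, hey, hbelow, htrue, habove, _⟩
    · exfalso
      have := hclause c hc1 hc2 (fun t h1 h2 => hfal t h1 (by omega))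
      omega
    · refine ⟨1, ?_⟩
      rw [Function.iterate_one]
      by_cases hMs : M ≤ σ.y - s
      · exact ⟨σ.x - r, σ.y - s + 1, by omega, by omega, by omega, by omega,
          M - (σ.x - r) + 1, by omega, by omega,
          fun t h1 h2 => htrue t h1 (by omega),
          fun t h1 h2 => by rw [habove t (by omega)]; exact hfal t (by omega) (by omega),
          fun t h1 h2 => by
            by_cases hc : t ≤ M
            · exact htrue t (by omega) hc
            · rw [habove t (by omega)]; exact htru t (by omega) (by omega)⟩
      · exact ⟨σ.x - r, σ.y - s + 1, by omega, by omega, by omega, by omega,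
          (σ.y - s + 1) - (σ.x - r) + 1, by omega, by omega,
          fun t h1 h2 => htrue t h1 (by omega),
          fun t h1 h2 => by omega,
          fun t h1 h2 => by
            by_cases hc : t ≤ M
            · exact htrue t (by omega) hc
            · rw [habove t (by omega)]; exact htru t (by omega) (by omega)⟩
  | succ n ih =>
    intro σ c hx hc1 hc2 hcn hsy hfal htru
    rcases equil_cases r s hr hs σ hx (by omega) with
      ⟨m, hm1, hm2, hex, hey, hbelow, hfalse, htrue, habove, hclause⟩ |
      ⟨M, hM1, hM2, hex, hey, hbelow, htrue, habove, _⟩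
    · have hmc := hclause c hc1 hc2 (fun t h1 h2 => hfal t h1 (by omega))
      obtain ⟨N, hN⟩ := ih (equil r s σ) m (by omega) (by omega) (by omega) (by omega)
        (by omega)
        (fun t h1 h2 => hfalse t h1 (by omega))
        (fun t h1 h2 => htrue t (by omega) (by omega))
      exact ⟨N + 1, by rwa [Function.iterate_succ_apply]⟩
    · -- same as base case left exit
      refine ⟨1, ?_⟩
      rw [Function.iterate_one]
      by_cases hMs : M ≤ σ.y - s
      · exact ⟨σ.x - r, σ.y - s + 1, by omega, by omega, by omega, by omega,
          M - (σ.x - r) + 1, by omega, by omega,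
          fun t h1 h2 => htrue t h1 (by omega),
          fun t h1 h2 => by rw [habove t (by omega)]; exact hfal t (by omega) (by omega),
          fun t h1 h2 => by
            by_cases hc : t ≤ M
            · exact htrue t (by omega) hc
            · rw [habove t (by omega)]; exact htru t (by omega) (by omega)⟩
      · exact ⟨σ.x - r, σ.y - s + 1, by omega, by omega, by omega, by omega,
          (σ.y - s + 1) - (σ.x - r) + 1, by omega, by omega,
          fun t h1 h2 => htrue t h1 (by omega),
          fun t h1 h2 => by omega,
          fun t h1 h2 => by
            by_cases hc : t ≤ M
            · exact htrue t (by omega) hc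
            · rw [habove t (by omega)]; exact htru t (by omega) (by omega)⟩

lemma propB (r s : ℤ) (hr : 0 < r) (hs : 0 < s) :
    ∀ (n : ℕ) (σ : RState) (M₀ : ℤ), σ.x ≤ 0 → 0 ≤ M₀ → M₀ ≤ σ.y → σ.y - M₀ ≤ n →
    (∀ t, σ.x ≤ t → t ≤ M₀ → σ.lab t = true) →
    ∃ N : ℕ, IsRec s ((equil r s)^[N] σ) := by
  intro n
  induction n with
  | zero =>
    intro σ M₀ hx hM₀1 hM₀2 hMn htru
    rcases equil_cases r s hr hs σ hx (by omega) with
      ⟨m, hm1, hm2, hex, hey, hbelow, hfalse, htrue, habove, _⟩ |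
      ⟨M, hM1, hM2, hex, hey, hbelow, htrue, habove, hclause⟩
    · refine ⟨1, ?_⟩
      rw [Function.iterate_one]
      exact ⟨σ.x, σ.y + 1, by omega, by omega, by omega, by omega, m - σ.x, by omega, by omega,
        fun t h1 h2 => by rw [hbelow t (by omega)]; exact htru t h1 (by omega),
        fun t h1 h2 => hfalse t (by omega) (by omega),
        fun t h1 h2 => htrue t (by omega) (by omega)⟩
    · exfalso
      have := hclause M₀ hM₀1 (fun t h1 h2 => htru t (by omega) h2)
      omega
  | succ n ih =>
    intro σ M₀ hx hM₀1 hM₀2 hMn htru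
    rcases equil_cases r s hr hs σ hx (by omega) with
      ⟨m, hm1, hm2, hex, hey, hbelow, hfalse, htrue, habove, _⟩ |
      ⟨M, hM1, hM2, hex, hey, hbelow, htrue, habove, hclause⟩
    · refine ⟨1, ?_⟩
      rw [Function.iterate_one]
      exact ⟨σ.x, σ.y + 1, by omega, by omega, by omega, by omega, m - σ.x, by omega, by omega,
        fun t h1 h2 => by rw [hbelow t (by omega)]; exact htru t h1 (by omega),
        fun t h1 h2 => hfalse t (by omega) (by omega),
        fun t h1 h2 => htrue t (by omega) (by omega)⟩
    · have hMc := hclause M₀ hM₀1 (fun t h1 h2 => htru t (by omega) h2)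
      obtain ⟨N, hN⟩ := ih (equil r s σ) M (by omega) (by omega) (by omega) (by omega)
        (fun t h1 h2 => htrue t (by omega) h2)
      exact ⟨N + 1, by rwa [Function.iterate_succ_apply]⟩

/-- The set of recurrent states is closed under `f_{r,s}`, and every state reaches a
recurrent state after finitely many applications of `f_{r,s}`. -/
theorem rec_closed_and_absorbing (r s : ℤ) (hr : 0 < r) (hs : 0 < s) :
    (∀ σ : RState, IsRec s σ → IsRec s (equil r s σ)) ∧
    (∀ σ : RState, σ.x ≤ 0 → 0 ≤ σ.y → ∃ N : ℕ, IsRec s ((equil r s)^[N] σ)) := by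
  constructor
  · exact fun σ h => rec_step r s hr hs σ h
  · intro σ hx hy
    rcases equil_cases r s hr hs σ hx hy with
      ⟨m, hm1, hm2, hex, hey, hbelow, hfalse, htrue, habove, _⟩ |
      ⟨M, hM1, hM2, hex, hey, hbelow, htrue, habove, _⟩
    · obtain ⟨N, hN⟩ := propA r s hr hs (m - σ.x).toNat (equil r s σ) m (by omega) (by omega)
        (by omega) (by omega) (by omega)
        (fun t h1 h2 => hfalse t h1 (by omega))
        (fun t h1 h2 => htrue t (by omega) (by omega))
      exact ⟨N + 1, by rwa [Function.iterate_succ_apply]⟩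
    · obtain ⟨N, hN⟩ := propB r s hr hs (σ.y - M).toNat (equil r s σ) M (by omega) hM1
        (by omega) (by omega)
        (fun t h1 h2 => htrue t (by omega) h2)
      exact ⟨N + 1, by rwa [Function.iterate_succ_apply]⟩
end

section
/- Let σ ∈ Rec(x, y) be the recurrent state of the form R^i L^j R^s, and let z = x + i be the first site of the L^j block (with the convention z = y when j = 0). Then f_{r,s}(σ) is the recurrent state whose parameters (leftmost occupied site, first site of the final R^s block, first site of the L block) are (x, y+s, z−y) if x + y ≤ z, and (x−r, y, z−x+1) if x + y > z. -/
def Reaches (lo hi : ℤ) (a b : ℤ × (ℤ → Bool)) : Prop :=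
  ∃ n, walkStep^[n] a = b ∧ ∀ m, m < n → lo ≤ (walkStep^[m] a).1 ∧ (walkStep^[m] a).1 ≤ hi

lemma reaches_trans {lo hi : ℤ} {a b c : ℤ × (ℤ → Bool)}
    (h1 : Reaches lo hi a b) (h2 : Reaches lo hi b c) : Reaches lo hi a c := by
  obtain ⟨n1, e1, m1⟩ := h1
  obtain ⟨n2, e2, m2⟩ := h2
  refine ⟨n2 + n1, ?_, ?_⟩
  · rw [Function.iterate_add_apply, e1, e2]
  · intro m hm
    rcases lt_or_ge m n1 with h | h
    · exact m1 m h
    · have : walkStep^[m] a = walkStep^[m - n1] b := by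
        rw [← e1, ← Function.iterate_add_apply]
        congr 1
        omega
      rw [this]
      exact m2 _ (by omega)

lemma reaches_congr {lo hi : ℤ} {a b b' : ℤ × (ℤ → Bool)}
    (h : Reaches lo hi a b) (e1 : b.1 = b'.1) (e2 : ∀ t, b.2 t = b'.2 t) :
    Reaches lo hi a b' := by
  have : b = b' := Prod.ext e1 (funext e2)
  rwa [this] at h

lemma walkStep_apply (t : ℤ) (ℓ : ℤ → Bool) :
    walkStep (t, ℓ) = ((if ℓ t then t + 1 else t - 1), Function.update ℓ t (!ℓ t)) := rfl

lemma reaches_single {lo hi : ℤ} {p : ℤ} {ℓ : ℤ → Bool}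
    (h1 : lo ≤ p) (h2 : p ≤ hi) :
    Reaches lo hi (p, ℓ) (walkStep (p, ℓ)) := by
  refine ⟨1, rfl, ?_⟩
  intro m hm
  interval_cases m
  exact ⟨h1, h2⟩

lemma sweepR (lo hi : ℤ) : ∀ (k : ℕ) (p : ℤ) (ℓ : ℤ → Bool),
    (∀ t, p ≤ t → t < p + k → ℓ t = true) →
    lo ≤ p → p + k - 1 ≤ hi →
    Reaches lo hi (p, ℓ) (p + k, fun t => if p ≤ t ∧ t < p + k then false else ℓ t) := by
  intro k
  induction k with
  | zero =>
    intro p ℓ hR h1 h2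
    refine ⟨0, ?_, by omega⟩
    simp only [Function.iterate_zero, id_eq]
    refine (Prod.ext (by omega) (funext fun t => ?_)).symm
    show (if p ≤ t ∧ t < p + (0:ℕ) then false else ℓ t) = ℓ t
    split_ifs with h
    · push_cast at h; omega
    · rfl
  | succ k ih =>
    intro p ℓ hR h1 h2
    have hp : ℓ p = true := hR p le_rfl (by push_cast; omega)
    have step : Reaches lo hi (p, ℓ) (p + 1, Function.update ℓ p false) := by
      have := reaches_single (ℓ := ℓ) h1 (show p ≤ hi by push_cast at h2 ⊢; omega)
      rwa [walkStep_apply, hp, if_pos rfl] at this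
      
    have tail := ih (p + 1) (Function.update ℓ p false)
      (fun t ht ht' => by
        rw [Function.update_apply]
        split_ifs with h
        · omega
        · exact hR t (by omega) (by push_cast at ht' ⊢; omega))
      (by omega) (by push_cast at h2 ⊢; omega)
    refine reaches_congr (reaches_trans step tail) (by push_cast; ring) ?_
    intro t
    simp only [Function.update_apply]
    split_ifs with h h' h'' <;> push_cast at * <;> first | rfl | omega

lemma sweepL (lo hi : ℤ) : ∀ (k : ℕ) (p : ℤ) (ℓ : ℤ → Bool),
    (∀ t, p - k < t → t ≤ p → ℓ t = false) →
    lo ≤ p - k + 1 → p ≤ hi →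
    Reaches lo hi (p, ℓ) (p - k, fun t => if p - k < t ∧ t ≤ p then true else ℓ t) := by
  intro k
  induction k with
  | zero =>
    intro p ℓ hL h1 h2
    refine ⟨0, ?_, by omega⟩
    simp only [Function.iterate_zero, id_eq]
    refine (Prod.ext (by omega) (funext fun t => ?_)).symm
    show (if p - (0:ℕ) < t ∧ t ≤ p then true else ℓ t) = ℓ t
    split_ifs with h
    · push_cast at h; omega
    · rfl
  | succ k ih =>
    intro p ℓ hL h1 h2
    have hp : ℓ p = false := hL p (by push_cast; omega) le_rfl
    have step : Reaches lo hi (p, ℓ) (p - 1, Function.update ℓ p true) := by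
      have := reaches_single (ℓ := ℓ) (show lo ≤ p by push_cast at h1; omega) h2
      rwa [walkStep_apply, hp, if_neg (by simp), show (!false) = true from rfl] at this
    have tail := ih (p - 1) (Function.update ℓ p true)
      (fun t ht ht' => by
        rw [Function.update_apply]
        split_ifs with h
        · omega
        · exact hL t (by push_cast at ht ⊢; omega) (by omega))
      (by push_cast at h1 ⊢; omega) (by omega)
    refine reaches_congr (reaches_trans step tail) (by push_cast; ring) ?_
    intro t
    simp only [Function.update_apply]
    split_ifs with h h' h'' <;> push_cast at * <;> first | rfl | omega

lemma sweepR' (lo hi p q : ℤ) (ℓ : ℤ → Bool) (hpq : p ≤ q)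
    (hR : ∀ t, p ≤ t → t < q → ℓ t = true) (h1 : lo ≤ p) (h2 : q - 1 ≤ hi) :
    Reaches lo hi (p, ℓ) (q, fun t => if p ≤ t ∧ t < q then false else ℓ t) := by
  have hq : p + ((q - p).toNat : ℤ) = q := by omega
  have := sweepR lo hi (q - p).toNat p ℓ
    (fun t ht ht' => hR t ht (by omega)) h1 (by omega)
  refine reaches_congr this hq ?_
  intro t
  simp only
  rw [hq]

lemma sweepL' (lo hi p q : ℤ) (ℓ : ℤ → Bool) (hpq : q ≤ p)
    (hL : ∀ t, q < t → t ≤ p → ℓ t = false) (h1 : lo ≤ q + 1) (h2 : p ≤ hi) :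
    Reaches lo hi (p, ℓ) (q, fun t => if q < t ∧ t ≤ p then true else ℓ t) := by
  have hq : p - ((p - q).toNat : ℤ) = q := by omega
  have := sweepL lo hi (p - q).toNat p ℓ
    (fun t ht ht' => hL t (by omega) ht') (by omega) h2
  refine reaches_congr this hq ?_
  intro t
  simp only
  rw [hq]

def mid (ℓ₀ : ℤ → Bool) (a b : ℤ) : ℤ → Bool := fun t => if a ≤ t ∧ t ≤ b then false else ℓ₀ t

lemma zig (x z y hi : ℤ) (ℓ₀ : ℤ → Bool)
    (hR1 : ∀ t, x ≤ t → t ≤ z - 1 → ℓ₀ t = true)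
    (hL : ∀ t, z ≤ t → t ≤ y - 1 → ℓ₀ t = false)
    (hyhi : y - 1 ≤ hi)
    (p : ℤ) (hp0 : 0 ≤ p) (hpz : z ≤ p) (hpy : p ≤ y - 1) (hxz : x + 1 ≤ z - p) :
    Reaches x hi (p, mid ℓ₀ (z - p) (z - 1)) (p + 1, mid ℓ₀ (z - (p+1)) (z - 1)) := by
  have step1 := sweepL' x hi p (z - p - 1) (mid ℓ₀ (z - p) (z - 1)) (by omega)
    (fun t ht ht' => by
      simp only [mid]
      split_ifs with h
      · rfl
      · exact hL t (by omega) (by omega))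
    (by omega) (by omega)
  set ℓa : ℤ → Bool := fun t => if z - p - 1 < t ∧ t ≤ p then true else mid ℓ₀ (z - p) (z - 1) t with hℓa
  have hbl : ℓa (z - p - 1) = true := by
    simp only [hℓa, mid]
    rw [if_neg (by omega), if_neg (by omega)]
    exact hR1 _ (by omega) (by omega)
  have step2 : Reaches x hi (z - p - 1, ℓa) (z - p, Function.update ℓa (z - p - 1) false) := by
    have := reaches_single (ℓ := ℓa) (show x ≤ z - p - 1 by omega) (show z - p - 1 ≤ hi by omega)
    rwa [walkStep_apply, hbl, if_pos rfl, show z - p - 1 + 1 = z - p by ring,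
      show (!true) = false from rfl] at this
  set ℓb := Function.update ℓa (z - p - 1) false with hℓb
  have step3 := sweepR' x hi (z - p) (p + 1) ℓb (by omega)
    (fun t ht ht' => by
      simp only [hℓb, Function.update_apply, hℓa]
      rw [if_neg (by omega), if_pos (by omega)])
    (by omega) (by omega)
  refine reaches_congr (reaches_trans step1 (reaches_trans step2 step3)) rfl ?_
  intro t
  simp only [hℓb, Function.update_apply, hℓa, mid]
  split_ifs <;>
    first
      | rfl
      | omega
      | exact (hL t (by omega) (by omega)).symm
      | exact hL t (by omega) (by omega)
      | exact (hR1 t (by omega) (by omega)).symm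
      | exact hR1 t (by omega) (by omega)

lemma chain (x z y hi : ℤ) (ℓ₀ : ℤ → Bool)
    (hR1 : ∀ t, x ≤ t → t ≤ z - 1 → ℓ₀ t = true)
    (hL : ∀ t, z ≤ t → t ≤ y - 1 → ℓ₀ t = false)
    (hyhi : y - 1 ≤ hi) :
    ∀ (k : ℕ) (p : ℤ), 0 ≤ p → z ≤ p → p + k ≤ y → x + k ≤ z - p →
    Reaches x hi (p, mid ℓ₀ (z - p) (z - 1)) (p + k, mid ℓ₀ (z - (p + k)) (z - 1)) := by
  intro k
  induction k with
  | zero =>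
    intro p _ _ _ _
    refine ⟨0, ?_, by omega⟩
    simp only [Function.iterate_zero, id_eq, Nat.cast_zero, add_zero]
  | succ k ih =>
    intro p hp0 hpz hpy hxz
    have h1 := zig x z y hi ℓ₀ hR1 hL hyhi p hp0 hpz (by push_cast at hpy; omega)
      (by push_cast at hxz; omega)
    have h2 := ih (p + 1) (by omega) (by omega) (by push_cast at hpy ⊢; omega)
      (by push_cast at hxz ⊢; omega)
    refine reaches_congr (reaches_trans h1 h2) (by push_cast; ring) ?_
    intro t
    simp only [mid]
    have : z - (p + 1 + (k:ℤ)) = z - (p + ((k:ℕ)+1:ℕ)) := by push_cast; ring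
    rw [this]

lemma start_reach (x z y s : ℤ) (ℓ₀ : ℤ → Bool)
    (hR1 : ∀ t, x ≤ t → t ≤ z - 1 → ℓ₀ t = true)
    (hx : x ≤ 0) (hzy : z ≤ y) (hs : 1 ≤ s) :
    Reaches x (y + s - 1) (0, ℓ₀) (max z 0, mid ℓ₀ (z - max z 0) (z - 1)) := by
  rcases le_or_gt z 0 with h | h
  · have : max z 0 = 0 := by omega
    rw [this]
    refine ⟨0, ?_, by omega⟩
    simp only [Function.iterate_zero, id_eq]
    refine (Prod.ext (by omega) (funext fun t => ?_)).symm
    simp only [mid]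
    rw [if_neg (by omega)]
  · have hm : max z 0 = z := by omega
    rw [hm]
    have := sweepR' x (y + s - 1) 0 z ℓ₀ (by omega)
      (fun t ht ht' => hR1 t (by omega) (by omega)) hx (by omega)
    refine reaches_congr this rfl ?_
    intro t
    simp only [mid]
    split_ifs <;> first | rfl | omega

lemma runRight (x z y s : ℤ) (ℓ₀ : ℤ → Bool)
    (hR1 : ∀ t, x ≤ t → t ≤ z - 1 → ℓ₀ t = true)
    (hL : ∀ t, z ≤ t → t ≤ y - 1 → ℓ₀ t = false)
    (hR2 : ∀ t, y ≤ t → t ≤ y + s - 1 → ℓ₀ t = true)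
    (hx : x ≤ 0) (hy : 0 ≤ y) (hzy : z ≤ y) (hs : 1 ≤ s) (hxyz : x + y ≤ z) :
    Reaches x (y + s - 1) (0, ℓ₀)
      (y + s, fun t => if z - y ≤ t ∧ t ≤ y + s - 1 then false else ℓ₀ t) := by
  have h0 := start_reach x z y s ℓ₀ hR1 hx hzy hs
  set p₀ := max z 0 with hp₀
  have hky : p₀ + ((y - p₀).toNat : ℤ) = y := by omega
  have h1 := chain x z y (y + s - 1) ℓ₀ hR1 hL (by omega) (y - p₀).toNat p₀
    (by omega) (by omega) (by omega) (by omega)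
  rw [hky] at h1
  have h2 := sweepR' x (y + s - 1) y (y + s) (mid ℓ₀ (z - y) (z - 1)) (by omega)
    (fun t ht ht' => by
      simp only [mid]
      rw [if_neg (by omega)]
      exact hR2 t ht (by omega))
    (by omega) (by omega)
  refine reaches_congr (reaches_trans h0 (reaches_trans h1 h2)) rfl ?_
  intro t
  simp only [mid]
  split_ifs <;>
    first
      | rfl
      | omega
      | exact (hL t (by omega) (by omega)).symm
      | exact hL t (by omega) (by omega)

lemma runLeft (x z y s : ℤ) (ℓ₀ : ℤ → Bool)
    (hR1 : ∀ t, x ≤ t → t ≤ z - 1 → ℓ₀ t = true)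
    (hL : ∀ t, z ≤ t → t ≤ y - 1 → ℓ₀ t = false)
    (hx : x ≤ 0) (hy : 0 ≤ y) (hxz : x ≤ z) (hzy : z ≤ y) (hs : 1 ≤ s)
    (hxyz : z < x + y) :
    Reaches x (y + s - 1) (0, ℓ₀)
      (x - 1, fun t => if x ≤ t ∧ t ≤ z - x then true else ℓ₀ t) := by
  have h0 := start_reach x z y s ℓ₀ hR1 hx hzy hs
  set p₀ := max z 0 with hp₀
  have hk : p₀ + ((z - x - p₀).toNat : ℤ) = z - x := by omega
  have h1 := chain x z y (y + s - 1) ℓ₀ hR1 hL (by omega) (z - x - p₀).toNat p₀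
    (by omega) (by omega) (by omega) (by omega)
  rw [hk] at h1
  have h2 := sweepL' x (y + s - 1) (z - x) (x - 1) (mid ℓ₀ (z - (z - x)) (z - 1)) (by omega)
    (fun t ht ht' => by
      simp only [mid]
      split_ifs with h
      · rfl
      · exact hL t (by omega) (by omega))
    (by omega) (by omega)
  refine reaches_congr (reaches_trans h0 (reaches_trans h1 h2)) rfl ?_
  intro t
  simp only [mid]
  split_ifs <;>
    first
      | rfl
      | omega
      | exact (hR1 t (by omega) (by omega)).symm
      | exact hR1 t (by omega) (by omega)

lemma sInf_eq_of_run (σ : RState) (e : ℤ) (ℓf : ℤ → Bool) (n : ℕ)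
    (hn : walkStep^[n] (0, σ.lab) = (e, ℓf))
    (hm : ∀ m, m < n → σ.x ≤ (walkStep^[m] (0, σ.lab)).1 ∧ (walkStep^[m] (0, σ.lab)).1 ≤ σ.y)
    (he : e < σ.x ∨ σ.y < e) :
    sInf {m | (walkStep^[m] (0, σ.lab)).1 ∉ Set.Icc σ.x σ.y} = n := by
  have hnS : n ∈ {m | (walkStep^[m] (0, σ.lab)).1 ∉ Set.Icc σ.x σ.y} := by
    simp only [Set.mem_setOf_eq, hn, Set.mem_Icc, not_and_or, not_le]
    exact he.imp (fun h => h) (fun h => h)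
  refine le_antisymm (Nat.sInf_le hnS) ?_
  by_contra hlt
  push_neg at hlt
  have hmem := Nat.sInf_mem (⟨n, hnS⟩ : Set.Nonempty _)
  have h2 := hm _ hlt
  simp only [Set.mem_setOf_eq, Set.mem_Icc] at hmem
  exact hmem ⟨h2.1, h2.2⟩


/-- On the recurrent state in `Rec(x, y)` of the form `RⁱLʲRˢ` with `z = x + i` the first
site of the `L` block (`z = y` when `j = 0`), the map `f_{r,s}` produces the recurrent state
with parameters `(x, y+s, z−y)` if `x + y ≤ z`, and `(x−r, y, z−x+1)` if `x + y > z`;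
i.e. the resulting labels are `R` on `[X, Z−1]`, `L` on `[Z, Y−1]` and `R` on `[Y, Y+s−1]`,
where `(X, Y, Z)` are the new parameters, and the new interval is `[X, Y+s−1]`. -/
theorem equil_piecewise_linear (r s : ℤ) (hr : 0 < r) (hs : 0 < s)
    (x y i z : ℤ) (hx : x ≤ 0) (hy : 0 ≤ y) (hi : 0 ≤ i) (hi' : i ≤ y - x)
    (hz : z = x + i)
    (σ : RState) (hσx : σ.x = x) (hσy : σ.y = y + s - 1)
    (hR1 : ∀ t, x ≤ t → t ≤ x + i - 1 → σ.lab t = true)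
    (hL : ∀ t, x + i ≤ t → t ≤ y - 1 → σ.lab t = false)
    (hR2 : ∀ t, y ≤ t → t ≤ y + s - 1 → σ.lab t = true) :
    (x + y ≤ z →
      (equil r s σ).x = x ∧ (equil r s σ).y = (y + s) + s - 1 ∧
      (∀ t, x ≤ t → t ≤ (z - y) - 1 → (equil r s σ).lab t = true) ∧
      (∀ t, z - y ≤ t → t ≤ (y + s) - 1 → (equil r s σ).lab t = false) ∧
      (∀ t, y + s ≤ t → t ≤ (y + s) + s - 1 → (equil r s σ).lab t = true)) ∧
    (x + y > z →
      (equil r s σ).x = x - r ∧ (equil r s σ).y = y + s - 1 ∧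
      (∀ t, x - r ≤ t → t ≤ (z - x + 1) - 1 → (equil r s σ).lab t = true) ∧
      (∀ t, z - x + 1 ≤ t → t ≤ y - 1 → (equil r s σ).lab t = false) ∧
      (∀ t, y ≤ t → t ≤ y + s - 1 → (equil r s σ).lab t = true)) := by
  have hR1' : ∀ t, x ≤ t → t ≤ z - 1 → σ.lab t = true := fun t h1 h2 => hR1 t h1 (by omega)
  have hL' : ∀ t, z ≤ t → t ≤ y - 1 → σ.lab t = false := fun t h1 h2 => hL t (by omega) h2
  have hzx : x ≤ z := by omega
  have hzy : z ≤ y := by omega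
  by_cases hc : x + y ≤ z
  · -- exit right
    obtain ⟨n, hn, hm⟩ := runRight x z y s σ.lab hR1' hL' hR2 hx hy hzy (by omega) hc
    have hsInf := sInf_eq_of_run σ (y + s) _ n hn
      (fun m hmlt => ⟨by rw [hσx]; exact (hm m hmlt).1, by rw [hσy]; exact (hm m hmlt).2⟩)
      (Or.inr (by omega))
    have hequil : equil r s σ =
        ⟨σ.x, σ.y + s, fun t => if σ.y + 1 ≤ t ∧ t ≤ σ.y + s then true
          else if z - y ≤ t ∧ t ≤ y + s - 1 then false else σ.lab t⟩ := by
      unfold equil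
      simp only [hsInf, hn]
      rw [if_neg (by omega)]
    rw [hequil]
    constructor
    · intro _
      refine ⟨hσx, by rw [hσy]; ring, ?_, ?_, ?_⟩
      · intro t h1 h2
        simp only
        rw [if_neg (by omega), if_neg (by omega)]
        exact hR1' t h1 (by omega)
      · intro t h1 h2
        simp only
        rw [if_neg (by omega), if_pos (by omega)]
      · intro t h1 h2
        simp only
        rw [if_pos (by omega)]
    · intro h
      exact absurd hc (by omega)
  · -- exit left
    push_neg at hc
    obtain ⟨n, hn, hm⟩ := runLeft x z y s σ.lab hR1' hL' hx hy hzx hzy (by omega) hc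
    have hsInf := sInf_eq_of_run σ (x - 1) _ n hn
      (fun m hmlt => ⟨by rw [hσx]; exact (hm m hmlt).1, by rw [hσy]; exact (hm m hmlt).2⟩)
      (Or.inl (by omega))
    have hequil : equil r s σ =
        ⟨σ.x - r, σ.y, fun t => if σ.x - r ≤ t ∧ t ≤ σ.x - 1 then true
          else if x ≤ t ∧ t ≤ z - x then true else σ.lab t⟩ := by
      unfold equil
      simp only [hsInf, hn]
      rw [if_pos (by omega)]
    rw [hequil]
    constructor
    · intro h
      exact absurd h (by omega)
    · intro _
      refine ⟨by rw [hσx], by rw [hσy], ?_, ?_, ?_⟩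
      · intro t h1 h2
        simp only [hσx]
        split_ifs with h h'
        · rfl
        · rfl
        · omega
      · intro t h1 h2
        simp only [hσx]
        rw [if_neg (by omega), if_neg (by omega)]
        exact hL' t (by omega) h2
      · intro t h1 h2
        simp only [hσx]
        rw [if_neg (by omega), if_neg (by omega)]
        exact hR2 t h1 h2
end

section
/- g_{r,s} is invariant under f_{r,s}: for every (x, y, z) ∈ ℤ³, g_{r,s}(f_{r,s}(x, y, z)) = g_{r,s}(x, y, z). -/
/-- The one-dimensional rotor-router equilibration map on recurrent-state triples,
`f_{r,s}(x,y,z) = (x, y+s, z-y)` if `x+y ≤ z`, and `(x-r, y, z-x+1)` otherwise. -/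
def rotorF (r s : ℤ) : ℤ × ℤ × ℤ → ℤ × ℤ × ℤ
  | (x, y, z) => if x + y ≤ z then (x, y + s, z - y) else (x - r, y, z - x + 1)

/-- The invariant `g_{r,s}(x,y,z) = s x² − r y² + (r−2) s x + r s y − 2 r s z`. -/
def rotorG (r s : ℤ) : ℤ × ℤ × ℤ → ℤ
  | (x, y, z) => s * x ^ 2 - r * y ^ 2 + (r - 2) * s * x + r * s * y - 2 * r * s * z

/-- `g_{r,s}` is invariant under `f_{r,s}`. -/
theorem rotorG_invariant (r s : ℤ) (hr : 0 < r) (hs : 0 < s) (p : ℤ × ℤ × ℤ) :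
    rotorG r s (rotorF r s p) = rotorG r s p := by
  obtain ⟨x, y, z⟩ := p
  simp only [rotorF, rotorG]
  split_ifs <;> ring
end

section
/- Let σ₀ ∈ Rec and write f_{r,s}^t(σ₀) = (x(t), y(t), z(t)). Then |x(t)·√s + y(t)·√r| is bounded independently of t. More precisely, for every ε > 0 there exists N ∈ ℕ such that for all t > N: −((r−2)√s + s√r + ε)/2 < x(t)√s + y(t)√r < ((r+2)√s + s√r + ε)/2. -/
set_option maxHeartbeats 1000000

/-- The set of recurrent states `{(x,y,z) : x ≤ 0 ≤ y, x ≤ z ≤ y}`. -/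
def RecSet : Set (ℤ × ℤ × ℤ) :=
  {p | p.1 ≤ 0 ∧ 0 ≤ p.2.1 ∧ p.1 ≤ p.2.2 ∧ p.2.2 ≤ p.2.1}

/-- The conserved quantity of the rotor dynamics. -/
def rotorInv (r s : ℤ) (p : ℤ × ℤ × ℤ) : ℤ :=
  2*r*s*p.2.2 + r*p.2.1^2 - s*p.1^2 - r*s*p.2.1 + s*(2-r)*p.1

lemma rotor_step (r s : ℤ) (hr : 0 < r) (hs : 0 < s) {p : ℤ × ℤ × ℤ}
    (hp : p ∈ RecSet) :
    rotorF r s p ∈ RecSet ∧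
      p.2.1 - p.1 + 1 ≤ (rotorF r s p).2.1 - (rotorF r s p).1 ∧
      rotorInv r s (rotorF r s p) = rotorInv r s p := by
  obtain ⟨x, y, z⟩ := p
  simp only [RecSet, Set.mem_setOf_eq] at hp
  obtain ⟨hx, hy, hxz, hzy⟩ := hp
  by_cases h : x + y ≤ z
  · simp only [rotorF, rotorInv, RecSet, Set.mem_setOf_eq, if_pos h]
    exact ⟨⟨hx, by omega, by omega, by omega⟩, by omega, by ring⟩
  · simp only [rotorF, rotorInv, RecSet, Set.mem_setOf_eq, if_neg h]
    exact ⟨⟨by omega, hy, by omega, by omega⟩, by omega, by ring⟩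

lemma rotor_orbit (r s : ℤ) (hr : 0 < r) (hs : 0 < s) (σ₀ : ℤ × ℤ × ℤ)
    (hσ₀ : σ₀ ∈ RecSet) (t : ℕ) :
    (rotorF r s)^[t] σ₀ ∈ RecSet ∧
      (t : ℤ) ≤ ((rotorF r s)^[t] σ₀).2.1 - ((rotorF r s)^[t] σ₀).1 ∧
      rotorInv r s ((rotorF r s)^[t] σ₀) = rotorInv r s σ₀ := by
  induction t with
  | zero =>
    simp only [Function.iterate_zero, id_eq]
    refine ⟨hσ₀, ?_, trivial⟩
    obtain ⟨h1, h2, _⟩ := hσ₀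
    push_cast
    omega
  | succ n ih =>
    obtain ⟨h1, h2, h3⟩ := ih
    rw [Function.iterate_succ_apply']
    obtain ⟨g1, g2, g3⟩ := rotor_step r s hr hs h1
    exact ⟨g1, by push_cast; omega, g3.trans h3⟩

lemma rotor_real_key (r s : ℤ) (hr : 0 < r) (hs : 0 < s) (x y z I0 : ℤ)
    (hx : x ≤ 0) (hy : 0 ≤ y) (hxz : x ≤ z) (hzy : z ≤ y)
    (hI : 2*r*s*z + r*y^2 - s*x^2 - r*s*y + s*(2-r)*x = I0) :
    ((y:ℝ) - x ≤ Real.sqrt r * y - Real.sqrt s * x) ∧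
    |(x:ℝ) * Real.sqrt s + (y:ℝ) * Real.sqrt r| ≤ Real.sqrt r * y - Real.sqrt s * x ∧
    (Real.sqrt r * y - Real.sqrt s * x) * ((x:ℝ) * Real.sqrt s + y * Real.sqrt r) ≤
      (I0:ℝ) + (Real.sqrt r * y - Real.sqrt s * x) * (((s:ℝ)*Real.sqrt r + ((r:ℝ)+2)*Real.sqrt s)/2)
        + ((x:ℝ) * Real.sqrt s + y * Real.sqrt r) * (((s:ℝ)*Real.sqrt r - ((r:ℝ)+2)*Real.sqrt s)/2) ∧
    (I0:ℝ) - (Real.sqrt r * y - Real.sqrt s * x) * (((s:ℝ)*Real.sqrt r + ((r:ℝ)-2)*Real.sqrt s)/2)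
        - ((x:ℝ) * Real.sqrt s + y * Real.sqrt r) * (((s:ℝ)*Real.sqrt r - ((r:ℝ)-2)*Real.sqrt s)/2)
      ≤ (Real.sqrt r * y - Real.sqrt s * x) * ((x:ℝ) * Real.sqrt s + y * Real.sqrt r) := by
  set sr := Real.sqrt r with hsrdef
  set ss := Real.sqrt s with hssdef
  have hr1 : (1:ℝ) ≤ (r:ℝ) := by exact_mod_cast hr
  have hs1 : (1:ℝ) ≤ (s:ℝ) := by exact_mod_cast hs
  have hsr2 : sr^2 = (r:ℝ) := Real.sq_sqrt (by linarith)
  have hss2 : ss^2 = (s:ℝ) := Real.sq_sqrt (by linarith)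
  have hsr1 : 1 ≤ sr := by
    have := Real.sqrt_le_sqrt hr1
    simpa [hsrdef] using this
  have hss1 : 1 ≤ ss := by
    have := Real.sqrt_le_sqrt hs1
    simpa [hssdef] using this
  have hxR : (x:ℝ) ≤ 0 := by exact_mod_cast hx
  have hyR : (0:ℝ) ≤ (y:ℝ) := by exact_mod_cast hy
  have hIR : 2*(r:ℝ)*s*z + r*(y:ℝ)^2 - s*(x:ℝ)^2 - r*(s:ℝ)*y + s*(2-(r:ℝ))*x = (I0:ℝ) := by
    exact_mod_cast hI
  have hm1 : (2*(r:ℝ)*s)*(x:ℝ) ≤ (2*(r:ℝ)*s)*(z:ℝ) := by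
    apply mul_le_mul_of_nonneg_left _ (by positivity)
    exact_mod_cast hxz
  have hm2 : (2*(r:ℝ)*s)*(z:ℝ) ≤ (2*(r:ℝ)*s)*(y:ℝ) := by
    apply mul_le_mul_of_nonneg_left _ (by positivity)
    exact_mod_cast hzy
  have e1 : (sr * y - ss * x) * ((x:ℝ) * ss + y * sr) = (r:ℝ)*(y:ℝ)^2 - (s:ℝ)*(x:ℝ)^2 := by
    linear_combination (y:ℝ)^2 * hsr2 - (x:ℝ)^2 * hss2
  have e2 : (sr * y - ss * x) * (((s:ℝ)*sr + ((r:ℝ)+2)*ss)/2)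
      + ((x:ℝ) * ss + y * sr) * (((s:ℝ)*sr - ((r:ℝ)+2)*ss)/2)
      = (r:ℝ)*(s:ℝ)*y - (s:ℝ)*((r:ℝ)+2)*x := by
    linear_combination (s:ℝ)*(y:ℝ)*hsr2 - ((r:ℝ)+2)*(x:ℝ)*hss2
  have e3 : (sr * y - ss * x) * (((s:ℝ)*sr + ((r:ℝ)-2)*ss)/2)
      + ((x:ℝ) * ss + y * sr) * (((s:ℝ)*sr - ((r:ℝ)-2)*ss)/2)
      = (r:ℝ)*(s:ℝ)*y - (s:ℝ)*((r:ℝ)-2)*x := by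
    linear_combination (s:ℝ)*(y:ℝ)*hsr2 - ((r:ℝ)-2)*(x:ℝ)*hss2
  have hineqU : (r:ℝ)*(y:ℝ)^2 - (s:ℝ)*(x:ℝ)^2 ≤ (I0:ℝ) + (r:ℝ)*(s:ℝ)*y - (s:ℝ)*((r:ℝ)+2)*x := by
    linarith [hIR, hm1]
  have hineqL : (I0:ℝ) - (r:ℝ)*(s:ℝ)*y + (s:ℝ)*((r:ℝ)-2)*x ≤ (r:ℝ)*(y:ℝ)^2 - (s:ℝ)*(x:ℝ)^2 := by
    linarith [hIR, hm2]
  have hsrY : (y:ℝ) ≤ sr * y := by nlinarith [mul_nonneg (sub_nonneg.mpr hsr1) hyR]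
  have hssX : ss * (x:ℝ) ≤ (x:ℝ) := by nlinarith [mul_nonneg (sub_nonneg.mpr hss1) (neg_nonneg.mpr hxR)]
  have c1 : (y:ℝ) - x ≤ sr * y - ss * x := by linarith
  have c3 : (sr * y - ss * x) * ((x:ℝ) * ss + y * sr) ≤
      (I0:ℝ) + (sr * y - ss * x) * (((s:ℝ)*sr + ((r:ℝ)+2)*ss)/2)
        + ((x:ℝ) * ss + y * sr) * (((s:ℝ)*sr - ((r:ℝ)+2)*ss)/2) := by
    rw [e1]
    linarith [e2, hineqU]
  have c4 : (I0:ℝ) - (sr * y - ss * x) * (((s:ℝ)*sr + ((r:ℝ)-2)*ss)/2)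
        - ((x:ℝ) * ss + y * sr) * (((s:ℝ)*sr - ((r:ℝ)-2)*ss)/2)
      ≤ (sr * y - ss * x) * ((x:ℝ) * ss + y * sr) := by
    rw [e1]
    linarith [e3, hineqL]
  have c2 : |(x:ℝ) * ss + (y:ℝ) * sr| ≤ sr * y - ss * x := by
    rw [abs_le]
    constructor
    · nlinarith [mul_nonneg (by linarith : (0:ℝ) ≤ sr) hyR]
    · nlinarith [mul_nonpos_of_nonneg_of_nonpos (by linarith : (0:ℝ) ≤ ss) hxR]
  exact ⟨c1, c2, c3, c4⟩

lemma rotor_assemble (Ap Bp Am Bm I0 : ℝ) (P M : ℕ → ℝ)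
    (hkey : ∀ t : ℕ, (t:ℝ) ≤ M t ∧ |P t| ≤ M t ∧
      M t * P t ≤ I0 + M t * Ap + P t * Bp ∧
      I0 - M t * Am - P t * Bm ≤ M t * P t) :
    (∃ B : ℝ, ∀ t : ℕ, |P t| ≤ B) ∧
    (∀ ε : ℝ, 0 < ε → ∃ N : ℕ, ∀ t : ℕ, N < t →
      -Am - ε/2 < P t ∧ P t < Ap + ε/2) := by
  set B : ℝ := |Ap| + |Am| + |Bp| + |Bm| + |I0| + 1 with hBdef
  have hB1 : 1 ≤ B := by
    have := abs_nonneg Ap; have := abs_nonneg Am; have := abs_nonneg Bp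
    have := abs_nonneg Bm; have := abs_nonneg I0
    linarith
  have hbound : ∀ t, |P t| ≤ B := by
    intro t
    obtain ⟨hM1, hM2, hU, hL⟩ := hkey t
    rcases le_or_gt (M t) 1 with h | h
    · have h1 := abs_nonneg (P t)
      linarith
    · have hMpos : (0:ℝ) < M t := by linarith
      have h1 : P t * Bp ≤ M t * |Bp| := by
        calc P t * Bp ≤ |P t * Bp| := le_abs_self _
        _ = |P t| * |Bp| := abs_mul _ _
        _ ≤ M t * |Bp| := mul_le_mul_of_nonneg_right hM2 (abs_nonneg _)
      have h1' : P t * Bm ≤ M t * |Bm| := by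
        calc P t * Bm ≤ |P t * Bm| := le_abs_self _
        _ = |P t| * |Bm| := abs_mul _ _
        _ ≤ M t * |Bm| := mul_le_mul_of_nonneg_right hM2 (abs_nonneg _)
      have h2 : I0 ≤ M t * |I0| :=
        le_trans (le_abs_self _) (le_mul_of_one_le_left (abs_nonneg _) h.le)
      have h2' : -I0 ≤ M t * |I0| :=
        le_trans (neg_le_abs _) (le_mul_of_one_le_left (abs_nonneg _) h.le)
      have h3 : M t * Ap ≤ M t * |Ap| := mul_le_mul_of_nonneg_left (le_abs_self _) hMpos.le
      have h3' : M t * Am ≤ M t * |Am| := mul_le_mul_of_nonneg_left (le_abs_self _) hMpos.le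
      have h4 : M t * P t ≤ M t * (|I0| + |Ap| + |Bp|) := by
        rw [mul_add, mul_add]; linarith
      have h5 : P t ≤ |I0| + |Ap| + |Bp| := le_of_mul_le_mul_left h4 hMpos
      have h4' : M t * (-(P t)) ≤ M t * (|I0| + |Am| + |Bm|) := by
        rw [mul_neg, mul_add, mul_add]; linarith
      have h5' : -(P t) ≤ |I0| + |Am| + |Bm| := le_of_mul_le_mul_left h4' hMpos
      rw [abs_le]
      constructor <;>
        linarith [abs_nonneg Ap, abs_nonneg Am, abs_nonneg Bp, abs_nonneg Bm, abs_nonneg I0]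
  refine ⟨⟨B, hbound⟩, fun ε hε => ?_⟩
  have hB0 : (0:ℝ) ≤ B := by linarith
  set X : ℝ := |I0| + B*|Bp| + B*|Bm| + 1 with hXdef
  have hBBp : 0 ≤ B*|Bp| := mul_nonneg hB0 (abs_nonneg _)
  have hBBm : 0 ≤ B*|Bm| := mul_nonneg hB0 (abs_nonneg _)
  have hX0 : (0:ℝ) < X := by
    have := abs_nonneg I0; linarith
  refine ⟨⌈2*X/ε⌉₊, fun t ht => ?_⟩
  obtain ⟨hM1, hM2, hU, hL⟩ := hkey t
  have hNt : (⌈2*X/ε⌉₊:ℝ) + 1 ≤ (t:ℝ) := by exact_mod_cast Nat.succ_le_of_lt ht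
  have hceil : 2*X/ε ≤ (⌈2*X/ε⌉₊:ℝ) := Nat.le_ceil _
  have hMX : 2*X/ε < M t := by linarith
  have hMpos : 0 < M t := lt_of_le_of_lt (by positivity) hMX
  have h2X : 2*X < ε * M t := by
    rw [div_lt_iff₀ hε] at hMX; linarith
  have h1 : P t * Bp ≤ B * |Bp| := by
    calc P t * Bp ≤ |P t * Bp| := le_abs_self _
    _ = |P t| * |Bp| := abs_mul _ _
    _ ≤ B * |Bp| := mul_le_mul_of_nonneg_right (hbound t) (abs_nonneg _)
  have h1' : P t * Bm ≤ B * |Bm| := by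
    calc P t * Bm ≤ |P t * Bm| := le_abs_self _
    _ = |P t| * |Bm| := abs_mul _ _
    _ ≤ B * |Bm| := mul_le_mul_of_nonneg_right (hbound t) (abs_nonneg _)
  have hI0a : I0 ≤ |I0| := le_abs_self _
  have hI0b : -I0 ≤ |I0| := neg_le_abs _
  constructor
  · have hlo : M t * (-Am - ε/2) < M t * P t := by
      rw [mul_sub, mul_neg]
      nlinarith
    exact lt_of_mul_lt_mul_left hlo hMpos.le
  · have hup : M t * P t < M t * (Ap + ε/2) := by
      rw [mul_add]
      nlinarith
    exact lt_of_mul_lt_mul_left hup hMpos.le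

/-- For any recurrent initial state `σ₀`, writing `f_{r,s}^t(σ₀) = (x(t), y(t), z(t))`,
the quantity `|x(t)√s + y(t)√r|` is bounded independently of `t`; more precisely, for every
`ε > 0` there is `N` such that for all `t > N`,
`−((r−2)√s + s√r + ε)/2 < x(t)√s + y(t)√r < ((r+2)√s + s√r + ε)/2`. -/
theorem rotor_linear_bounds (r s : ℤ) (hr : 0 < r) (hs : 0 < s)
    (σ₀ : ℤ × ℤ × ℤ) (hσ₀ : σ₀ ∈ RecSet) :
    (∃ B : ℝ, ∀ t : ℕ,
      |(((rotorF r s)^[t] σ₀).1 : ℝ) * Real.sqrt s +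
        (((rotorF r s)^[t] σ₀).2.1 : ℝ) * Real.sqrt r| ≤ B) ∧
    (∀ ε : ℝ, 0 < ε → ∃ N : ℕ, ∀ t : ℕ, N < t →
      -(((r : ℝ) - 2) * Real.sqrt s + (s : ℝ) * Real.sqrt r + ε) / 2 <
          (((rotorF r s)^[t] σ₀).1 : ℝ) * Real.sqrt s +
            (((rotorF r s)^[t] σ₀).2.1 : ℝ) * Real.sqrt r ∧
        (((rotorF r s)^[t] σ₀).1 : ℝ) * Real.sqrt s +
            (((rotorF r s)^[t] σ₀).2.1 : ℝ) * Real.sqrt r <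
          (((r : ℝ) + 2) * Real.sqrt s + (s : ℝ) * Real.sqrt r + ε) / 2) := by
  have hkey : ∀ t : ℕ,
      (t:ℝ) ≤ Real.sqrt r * (((rotorF r s)^[t] σ₀).2.1 : ℝ)
          - Real.sqrt s * (((rotorF r s)^[t] σ₀).1 : ℝ) ∧
      |(((rotorF r s)^[t] σ₀).1 : ℝ) * Real.sqrt s +
        (((rotorF r s)^[t] σ₀).2.1 : ℝ) * Real.sqrt r| ≤
        Real.sqrt r * (((rotorF r s)^[t] σ₀).2.1 : ℝ)
          - Real.sqrt s * (((rotorF r s)^[t] σ₀).1 : ℝ) ∧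
      (Real.sqrt r * (((rotorF r s)^[t] σ₀).2.1 : ℝ)
          - Real.sqrt s * (((rotorF r s)^[t] σ₀).1 : ℝ)) *
        ((((rotorF r s)^[t] σ₀).1 : ℝ) * Real.sqrt s +
          (((rotorF r s)^[t] σ₀).2.1 : ℝ) * Real.sqrt r) ≤
        ((rotorInv r s σ₀ : ℤ) : ℝ)
          + (Real.sqrt r * (((rotorF r s)^[t] σ₀).2.1 : ℝ)
              - Real.sqrt s * (((rotorF r s)^[t] σ₀).1 : ℝ)) *
            (((s:ℝ)*Real.sqrt r + ((r:ℝ)+2)*Real.sqrt s)/2)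
          + ((((rotorF r s)^[t] σ₀).1 : ℝ) * Real.sqrt s +
              (((rotorF r s)^[t] σ₀).2.1 : ℝ) * Real.sqrt r) *
            (((s:ℝ)*Real.sqrt r - ((r:ℝ)+2)*Real.sqrt s)/2) ∧
      ((rotorInv r s σ₀ : ℤ) : ℝ)
          - (Real.sqrt r * (((rotorF r s)^[t] σ₀).2.1 : ℝ)
              - Real.sqrt s * (((rotorF r s)^[t] σ₀).1 : ℝ)) *
            (((s:ℝ)*Real.sqrt r + ((r:ℝ)-2)*Real.sqrt s)/2)
          - ((((rotorF r s)^[t] σ₀).1 : ℝ) * Real.sqrt s +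
              (((rotorF r s)^[t] σ₀).2.1 : ℝ) * Real.sqrt r) *
            (((s:ℝ)*Real.sqrt r - ((r:ℝ)-2)*Real.sqrt s)/2) ≤
        (Real.sqrt r * (((rotorF r s)^[t] σ₀).2.1 : ℝ)
            - Real.sqrt s * (((rotorF r s)^[t] σ₀).1 : ℝ)) *
          ((((rotorF r s)^[t] σ₀).1 : ℝ) * Real.sqrt s +
            (((rotorF r s)^[t] σ₀).2.1 : ℝ) * Real.sqrt r) := by
    intro t
    obtain ⟨hrec, hgrow, hinv⟩ := rotor_orbit r s hr hs σ₀ hσ₀ t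
    obtain ⟨hqx, hqy, hqxz, hqzy⟩ := hrec
    obtain ⟨c1, c2, c3, c4⟩ := rotor_real_key r s hr hs
      ((rotorF r s)^[t] σ₀).1 ((rotorF r s)^[t] σ₀).2.1 ((rotorF r s)^[t] σ₀).2.2
      (rotorInv r s σ₀) hqx hqy hqxz hqzy hinv
    refine ⟨?_, c2, c3, c4⟩
    have h : (t:ℝ) ≤ (((rotorF r s)^[t] σ₀).2.1 : ℝ) - (((rotorF r s)^[t] σ₀).1 : ℝ) := by
      exact_mod_cast hgrow
    linarith
  obtain ⟨part1, part2⟩ := rotor_assemble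
    (((s:ℝ)*Real.sqrt r + ((r:ℝ)+2)*Real.sqrt s)/2)
    (((s:ℝ)*Real.sqrt r - ((r:ℝ)+2)*Real.sqrt s)/2)
    (((s:ℝ)*Real.sqrt r + ((r:ℝ)-2)*Real.sqrt s)/2)
    (((s:ℝ)*Real.sqrt r - ((r:ℝ)-2)*Real.sqrt s)/2)
    ((rotorInv r s σ₀ : ℤ) : ℝ)
    (fun t => (((rotorF r s)^[t] σ₀).1 : ℝ) * Real.sqrt s +
      (((rotorF r s)^[t] σ₀).2.1 : ℝ) * Real.sqrt r)
    (fun t => Real.sqrt r * (((rotorF r s)^[t] σ₀).2.1 : ℝ)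
      - Real.sqrt s * (((rotorF r s)^[t] σ₀).1 : ℝ))
    hkey
  refine ⟨part1, fun ε hε => ?_⟩
  obtain ⟨N, hN⟩ := part2 ε hε
  refine ⟨N, fun t ht => ?_⟩
  obtain ⟨hl, hu⟩ := hN t ht
  have hl' : -(((s:ℝ)*Real.sqrt r + ((r:ℝ)-2)*Real.sqrt s)/2) - ε/2 <
      (((rotorF r s)^[t] σ₀).1 : ℝ) * Real.sqrt s +
        (((rotorF r s)^[t] σ₀).2.1 : ℝ) * Real.sqrt r := hl
  have hu' : (((rotorF r s)^[t] σ₀).1 : ℝ) * Real.sqrt s +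
        (((rotorF r s)^[t] σ₀).2.1 : ℝ) * Real.sqrt r <
      ((s:ℝ)*Real.sqrt r + ((r:ℝ)+2)*Real.sqrt s)/2 + ε/2 := hu
  constructor
  · have e : -(((s:ℝ)*Real.sqrt r + ((r:ℝ)-2)*Real.sqrt s)/2) - ε/2 =
        -(((r : ℝ) - 2) * Real.sqrt s + (s : ℝ) * Real.sqrt r + ε) / 2 := by ring
    linarith [e]
  · have e : ((s:ℝ)*Real.sqrt r + ((r:ℝ)+2)*Real.sqrt s)/2 + ε/2 =
        (((r : ℝ) + 2) * Real.sqrt s + (s : ℝ) * Real.sqrt r + ε) / 2 := by ring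
    linarith [e]
end

section
/- Let r = 2, s = 1 and α = √2 − 1. Then for every n ∈ ℕ, f_{2,1}^n(0, 0, 0) = (x(n), y(n), z(n)), where x(n) = −2·⌊(n + 1/2)α⌋, y(n) = n + x(n)/2, and z(n) = (x(n)² − 2·y(n)·(y(n) − 1))/4. -/
/-- Squared, integral form of `√2 a ≤ m + 1/2 ∧ m - 1/2 < √2 (a + 1)`. -/
def InSqrtTwoStrip (a m : ℤ) : Prop :=
  8 * a ^ 2 ≤ (2 * m + 1) ^ 2 ∧ (2 * m - 1) ^ 2 < 8 * (a + 1) ^ 2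

namespace InSqrtTwoStrip

variable {a m : ℤ}

theorem zero_zero : InSqrtTwoStrip 0 0 := by
  norm_num [InSqrtTwoStrip]

theorem add_one_right (hm : 0 ≤ m) (h : InSqrtTwoStrip a m)
    (hlt : (2 * m + 1) ^ 2 < 8 * (a + 1) ^ 2) : InSqrtTwoStrip a (m + 1) :=
  ⟨by nlinarith [h.1], by linarith⟩

theorem add_one_left (ha : 0 ≤ a) (h : InSqrtTwoStrip a m)
    (hle : 8 * (a + 1) ^ 2 ≤ (2 * m + 1) ^ 2) : InSqrtTwoStrip (a + 1) m :=
  ⟨hle, by nlinarith [h.2]⟩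

theorem floor_eq (ha : 0 ≤ a) (hm : 0 ≤ m) (h : InSqrtTwoStrip a m) :
    ⌊(((a + m : ℤ) : ℝ) + 1 / 2) * (√2 - 1)⌋ = a := by
  have hsq : √2 ^ 2 = 2 := Real.sq_sqrt zero_le_two
  have hone : 1 < √2 := Real.one_lt_sqrt_two
  have ha' : (0 : ℝ) ≤ a := by exact_mod_cast ha
  have hm' : (0 : ℝ) ≤ m := by exact_mod_cast hm
  have hlo : √2 * a ≤ m + 1 / 2 := by
    have h1 : (8 * a ^ 2 : ℝ) ≤ (2 * m + 1) ^ 2 := by exact_mod_cast h.1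
    refine le_of_pow_le_pow_left₀ two_ne_zero (by positivity) ?_
    nlinarith
  have hhi : m - 1 / 2 < √2 * (a + 1) := by
    have h2 : ((2 * m - 1) ^ 2 : ℝ) < 8 * (a + 1) ^ 2 := by exact_mod_cast h.2
    refine lt_of_pow_lt_pow_left₀ 2 (by positivity) ?_
    nlinarith
  -- `(a + m + 1/2)(√2 - 1) - a = (√2 - 1)(m + 1/2 - √2 a)`, and similarly for the upper bound
  rw [Int.floor_eq_iff]
  push_cast
  constructor <;> nlinarith [mul_nonneg (sub_nonneg.2 hone.le) (sub_nonneg.2 hlo),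
    mul_pos (sub_pos.2 hone) (sub_pos.2 hhi)]

end InSqrtTwoStrip

def stripState (a m : ℤ) : ℤ × ℤ × ℤ := (-2 * a, m, a ^ 2 - m * (m - 1) / 2)

theorem rotorF_stripState (a m : ℤ) :
    rotorF 2 1 (stripState a m) =
      if (2 * m + 1) ^ 2 < 8 * (a + 1) ^ 2 then stripState a (m + 1) else stripState (a + 1) m := by
  obtain ⟨k, hk⟩ := Int.even_mul_pred_self m
  have hz : m * (m - 1) / 2 = k := by omega
  have hz' : (m + 1) * (m + 1 - 1) / 2 = k + m := by
    have : (m + 1) * (m + 1 - 1) = m * (m - 1) + 2 * m := by ring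
    omega
  have hcond : -2 * a + m ≤ a ^ 2 - k ↔ (2 * m + 1) ^ 2 < 8 * (a + 1) ^ 2 := by
    constructor <;> intro h <;> nlinarith
  simp only [stripState, rotorF, hz, hz', hcond]
  split_ifs <;> ext <;> simp only <;> ring

theorem exists_iterate_rotorF_eq_stripState (n : ℕ) :
    ∃ a m : ℤ, 0 ≤ a ∧ 0 ≤ m ∧ a + m = n ∧ InSqrtTwoStrip a m ∧
      (rotorF 2 1)^[n] (0, 0, 0) = stripState a m := by
  induction n with
  | zero => exact ⟨0, 0, le_rfl, le_rfl, rfl, .zero_zero, rfl⟩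
  | succ n ih =>
    obtain ⟨a, m, ha, hm, hn, hs, hp⟩ := ih
    rw [Function.iterate_succ_apply', hp, rotorF_stripState]
    split_ifs with hlt
    · exact ⟨a, m + 1, ha, by omega, by push_cast; omega, hs.add_one_right hm hlt, rfl⟩
    · exact ⟨a + 1, m, by omega, hm, by push_cast; omega, hs.add_one_left ha (not_lt.1 hlt), rfl⟩

/-- Closed form for the orbit of `(0,0,0)` under `f_{2,1}`: with `α = √2 − 1`,
`f_{2,1}^n(0,0,0) = (x(n), y(n), z(n))` where `x(n) = −2⌊(n + 1/2)α⌋`,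
`y(n) = n + x(n)/2` (i.e. `2 y(n) = 2n + x(n)`), and
`z(n) = (x(n)² − 2 y(n)(y(n) − 1))/4` (i.e. `4 z(n) = x(n)² − 2 y(n)(y(n) − 1)`). -/
theorem rotor_orbit_closed_form (n : ℕ) :
    ((rotorF 2 1)^[n] (0, 0, 0)).1 = -2 * ⌊((n : ℝ) + 1 / 2) * (Real.sqrt 2 - 1)⌋ ∧
    2 * ((rotorF 2 1)^[n] (0, 0, 0)).2.1 = 2 * (n : ℤ) + ((rotorF 2 1)^[n] (0, 0, 0)).1 ∧
    4 * ((rotorF 2 1)^[n] (0, 0, 0)).2.2 =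
      ((rotorF 2 1)^[n] (0, 0, 0)).1 ^ 2 -
        2 * ((rotorF 2 1)^[n] (0, 0, 0)).2.1 * (((rotorF 2 1)^[n] (0, 0, 0)).2.1 - 1) := by
  obtain ⟨a, m, ha, hm, hn, hs, hp⟩ := exists_iterate_rotorF_eq_stripState n
  have hfloor : ⌊((n : ℝ) + 1 / 2) * (√2 - 1)⌋ = a := by
    rw [← hs.floor_eq ha hm, hn]; push_cast; rfl
  have hdiv : m * (m - 1) / 2 * 2 = m * (m - 1) := Int.ediv_two_mul_two_of_even m.even_mul_pred_self
  rw [hp, hfloor]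
  refine ⟨rfl, ?_, ?_⟩ <;> simp only [stripState]
  · omega
  · linear_combination (-2 : ℤ) * hdiv
end

section
/- Let r = s = 1, let n be a positive integer, and write f_{1,1}^t(−n, 0, 0) = (x(t), y(t), z(t)). Then for all t ≥ 0: x(t)² − y(t)² < n² + n and (x(t) − 1)² − (y(t) − 1)² > n². -/
/-- Inductive invariant for the orbit. -/
def Pinv (n : ℤ) (p : ℤ × ℤ × ℤ) : Prop :=
  p.1 ^ 2 - p.2.1 ^ 2 - p.1 + p.2.1 - 2 * p.2.2 = n ^ 2 + n ∧ 0 ≤ p.2.1 ∧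
  p.1 ≤ p.2.2 ∧ p.2.2 ≤ p.2.1 ∧ p.1 + p.2.1 ≤ 1 ∧
  p.1 - p.2.1 + 2 * p.2.2 ≤ -1 ∧ 1 - n ≤ p.2.1 - p.1 + 2 * p.2.2

lemma Pinv_step (n : ℤ) (hn : 0 < n) (p : ℤ × ℤ × ℤ) (h : Pinv n p) :
    Pinv n (rotorF 1 1 p) := by
  obtain ⟨x, y, z⟩ := p
  obtain ⟨hQ, hy, hxz, hzy, hb, hL1, hL2⟩ := h
  simp only [Pinv] at *
  rw [rotorF]
  split_ifs with hc <;> dsimp only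
  · have hb0 : x + y ≤ 0 := by nlinarith [mul_nonneg (sub_nonneg.2 hzy) (sub_nonneg.2 hxz)]
    refine ⟨by ring_nf; ring_nf at hQ; linarith, by linarith, by linarith, by linarith,
      by linarith, by nlinarith, ?_⟩
    nlinarith [mul_nonneg (by linarith : (0:ℤ) ≤ y - x + y + x) (by linarith : (0:ℤ) ≤ 1 - (x + y)),
      mul_nonneg (by linarith : (0:ℤ) ≤ y - x) (by linarith : (0:ℤ) ≤ 1 - (x + y)),
      sq_nonneg (x + y + n), sq_nonneg (x + y - n)]
  · push_neg at hc
    have hx0 : x ≤ 0 := by linarith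
    refine ⟨by ring_nf; ring_nf at hQ; linarith, hy, by linarith, by linarith,
      by linarith, ?_, by linarith⟩
    rcases le_or_gt (x + y) 0 with h0 | h0
    · linarith
    · have h1 : x + y = 1 := by omega
      nlinarith [h1]

/-- With `r = s = 1` and initial state `(−n, 0, 0)` for a positive integer `n`, the orbit
`(x(t), y(t), z(t)) = f_{1,1}^t(−n,0,0)` satisfies `x(t)² − y(t)² < n² + n` and
`(x(t)−1)² − (y(t)−1)² > n²` for all `t ≥ 0`. -/
theorem rotor_hyperbola_bounds (n : ℤ) (hn : 0 < n) (t : ℕ) :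
    (((rotorF 1 1)^[t] (-n, 0, 0)).1 ^ 2 - ((rotorF 1 1)^[t] (-n, 0, 0)).2.1 ^ 2
      < n ^ 2 + n) ∧
    ((((rotorF 1 1)^[t] (-n, 0, 0)).1 - 1) ^ 2 - (((rotorF 1 1)^[t] (-n, 0, 0)).2.1 - 1) ^ 2
      > n ^ 2) := by
  have key : Pinv n ((rotorF 1 1)^[t] (-n, 0, 0)) := by
    induction t with
    | zero =>
      simp only [Function.iterate_zero, id_eq, Pinv]
      refine ⟨by ring, by norm_num, by linarith, by norm_num, by linarith,
        by linarith, by linarith⟩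
    | succ k ih =>
      rw [Function.iterate_succ_apply']
      exact Pinv_step n hn _ ih
  obtain ⟨hQ, hy, hxz, hzy, hb, hL1, hL2⟩ := key
  constructor
  · nlinarith
  · nlinarith
end

section
/- Let r = s = 1 and let a, b, n be positive integers with a² + n² = b². Writing f_{1,1}^t(−n, 0, 0) = (x(t), y(t), z(t)), at time t = a + b − n we have x(t) = −b and y(t) = a. -/
lemma rotor_inv (n : ℤ) (hn : 0 < n) :
    ∀ t : ℕ, ∀ x y z : ℤ, (rotorF 1 1)^[t] (-n, 0, 0) = (x, y, z) →
      y = (t : ℤ) + n + x ∧ 2 * z = x ^ 2 - x - y ^ 2 + y - n ^ 2 - n ∧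
      x ≤ z ∧ z ≤ y ∧ x ≤ -n ∧ 0 ≤ y := by
  intro t
  induction t with
  | zero =>
    intro x y z h
    simp only [Function.iterate_zero_apply, Prod.mk.injEq] at h
    obtain ⟨rfl, rfl, rfl⟩ := h
    refine ⟨by push_cast; ring, by ring, by linarith, le_refl _, le_refl _, le_refl _⟩
  | succ t ih =>
    intro x y z h
    rw [Function.iterate_succ_apply'] at h
    obtain ⟨⟨x', y', z'⟩, hprev⟩ : ∃ p, (rotorF 1 1)^[t] (-n, 0, 0) = p := ⟨_, rfl⟩
    obtain ⟨h1, h2, h3, h4, h5, h6⟩ := ih x' y' z' hprev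
    rw [hprev] at h
    simp only [rotorF] at h
    split_ifs at h with hc
    · simp only [Prod.mk.injEq] at h
      obtain ⟨rfl, rfl, rfl⟩ := h
      refine ⟨by push_cast; linarith, by linear_combination h2, by linarith,
        by linarith, h5, by linarith⟩
    · push_neg at hc
      simp only [Prod.mk.injEq] at h
      obtain ⟨rfl, rfl, rfl⟩ := h
      refine ⟨by push_cast; linarith, by linear_combination h2, by linarith,
        by omega, by linarith, h6⟩

/-- Pythagorean triples in the rotor-router model: if `a² + n² = b²` with `a, b, n` positive
integers, then starting from `(−n, 0, 0)`, at time `t = a + b − n` the orbit of `f_{1,1}`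
satisfies `x(t) = −b` and `y(t) = a`. -/
theorem rotor_pythagorean (a b n : ℤ) (ha : 0 < a) (hb : 0 < b) (hn : 0 < n)
    (hpyth : a ^ 2 + n ^ 2 = b ^ 2) :
    ((rotorF 1 1)^[(a + b - n).toNat] (-n, 0, 0)).1 = -b ∧
    ((rotorF 1 1)^[(a + b - n).toNat] (-n, 0, 0)).2.1 = a := by
  have hbn : n < b := by nlinarith [mul_pos ha ha]
  have hban : b ≤ a + n := by nlinarith [mul_pos ha hn]
  have hT : ((a + b - n).toNat : ℤ) = a + b - n := Int.toNat_of_nonneg (by linarith)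
  obtain ⟨⟨x, y, z⟩, hs⟩ : ∃ p, (rotorF 1 1)^[(a + b - n).toNat] (-n, 0, 0) = p := ⟨_, rfl⟩
  obtain ⟨h1, h2, h3, h4, h5, h6⟩ := rotor_inv n hn _ x y z hs
  rw [hT] at h1
  have hy : y = a + b + x := by linarith
  subst hy
  have hA : x < -b + 1 := by
    by_contra hcon
    push_neg at hcon
    have h7 := mul_le_mul_of_nonneg_left hcon (show (0:ℤ) ≤ 2*a + 2*b + 2 by linarith)
    nlinarith [h2, h3]
  have hB : -b - 1 < x := by
    by_contra hcon
    push_neg at hcon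
    have h7 := mul_le_mul_of_nonneg_left hcon (show (0:ℤ) ≤ 2*a + 2*b + 2 by linarith)
    nlinarith [h2, h4]
  have hx : x = -b := by omega
  rw [hs]
  exact ⟨hx, by rw [hx]; ring⟩
end

section
/- Assume the rotor ordering satisfies the standard conventions (i) and (ii). Then for every n ∈ ℕ and every i ∈ {1, …, d}, 0 ≤ Σ_{v ∈ A_n} v_i ≤ n, where v_i denotes the i-th coordinate of v; consequently the center of mass of the set of occupied sites is confined to the unit cube {x ∈ ℝ^d : 0 ≤ x_i ≤ 1}. -/
/-- The growth map: run the rotor walk from the origin until it first exits the occupied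
region, adjoin the exit point, and give it the first rotor direction. -/
noncomputable def grow {d : ℕ} (hd : 0 < d) (ε : Fin (2 * d) → Zd d) :
    Finset (Zd d) × (Zd d → Fin (2 * d)) → Finset (Zd d) × (Zd d → Fin (2 * d)) :=
  fun c =>
    let N := sInf {n | ((rotorStep ε)^[n] (0, c.2)).1 ∉ c.1}
    let w := (rotorStep ε)^[N] (0, c.2)
    (insert w.1 c.1, Function.update w.2 w.1 ⟨0, by omega⟩)

/-- The configuration (occupied region, rotors) after `n` particles have been deposited at
the origin and allowed to equilibrate, starting from `A₀ = {0}` and all rotors in the first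
position. -/
noncomputable def conf {d : ℕ} (hd : 0 < d) (ε : Fin (2 * d) → Zd d) (n : ℕ) :
    Finset (Zd d) × (Zd d → Fin (2 * d)) :=
  (grow hd ε)^[n] ({0}, fun _ => ⟨0, by omega⟩)

section Aux

variable {d : ℕ} (ε : Fin (2 * d) → Zd d)

/-- prefix sums of the rotor directions -/
def pref (j : Fin (2 * d)) : Zd d :=
  ∑ k ∈ Finset.univ.filter (fun k : Fin (2 * d) => k.val < j.val), ε k

lemma rotorStep_eval (c : Zd d × (Zd d → Fin (2 * d))) :
    rotorStep ε c = (c.1 + ε (c.2 c.1), Function.update c.2 c.1 (finInc (c.2 c.1))) := by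
  cases c; rfl

lemma pref_zero {j : Fin (2*d)} (h : j.val = 0) : pref ε j = 0 := by
  unfold pref
  rw [Finset.filter_false_of_mem, Finset.sum_empty]
  intro k _; omega

lemma single_ne_zero' (i : Fin d) (c : ℤ) (hc : c ≠ 0) : (Pi.single i c : Zd d) ≠ 0 := by
  intro h
  have := congrFun h i
  simp at this
  exact hc this

lemma mem_Ed_ne_zero {v : Zd d} (hv : v ∈ Ed d) : v ≠ 0 := by
  obtain ⟨i, h | h⟩ := hv <;> subst h <;> exact single_ne_zero' i _ (by norm_num)

lemma Ed_neg {v : Zd d} (hv : v ∈ Ed d) : -v ∈ Ed d := by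
  obtain ⟨i, h | h⟩ := hv <;> subst h <;> exact ⟨i, by simp [← Pi.single_neg]⟩

variable (ι : Zd d → Fin (2 * d))
variable (hε₂ : ∀ k, ε k ∈ Ed d) (hιε : ∀ k, ι (ε k) = k) (hει : ∀ v ∈ Ed d, ε (ι v) = v)

include hε₂ hιε hει in
lemma sum_eps_zero : ∑ k : Fin (2 * d), ε k = 0 := by
  refine Finset.sum_involution (fun k _ => ι (-ε k)) ?_ ?_ (fun _ _ => Finset.mem_univ _) ?_
  · intro k _
    show ε k + ε (ι (-ε k)) = 0
    rw [hει _ (Ed_neg (hε₂ k))]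
    abel
  · intro k _ hne h
    have h' : ι (-ε k) = k := h
    have heq : ε k = -ε k := by
      conv_lhs => rw [← h']
      rw [hει _ (Ed_neg (hε₂ k))]
    have h2 : ε k + ε k = 0 := by
      nth_rewrite 2 [heq]; abel
    refine hne (funext fun j => ?_)
    have h3 : ε k j + ε k j = 0 := by simpa using congrFun h2 j
    show ε k j = (0:ℤ)
    omega
  · intro k _
    show ι (-ε (ι (-ε k))) = k
    rw [hει _ (Ed_neg (hε₂ k)), neg_neg, hιε]

include hε₂ hιε hει in
lemma pref_finInc (j : Fin (2 * d)) : pref ε (finInc j) = pref ε j + ε j := by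
  have hins : Finset.univ.filter (fun k : Fin (2 * d) => k.val < j.val + 1)
      = insert j (Finset.univ.filter (fun k : Fin (2 * d) => k.val < j.val)) := by
    ext k
    simp only [Finset.mem_filter, Finset.mem_insert, Finset.mem_univ, true_and]
    constructor
    · intro hk
      rcases Nat.lt_or_ge k.val j.val with h | h
      · exact Or.inr h
      · exact Or.inl (Fin.ext (by omega))
    · rintro (rfl | hk) <;> omega
  have key : pref ε j + ε j
      = ∑ k ∈ Finset.univ.filter (fun k : Fin (2 * d) => k.val < j.val + 1), ε k := by
    rw [hins, Finset.sum_insert (by simp), add_comm]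
    rfl
  by_cases hj : j.val + 1 < 2 * d
  · rw [key]
    unfold pref finInc
    congr 1
    simp [Nat.mod_eq_of_lt hj]
  · -- wrap-around : j.val + 1 = 2*d
    have hj2 : j.val + 1 = 2 * d := by have := j.isLt; omega
    have h0 : finInc j = ⟨0, by omega⟩ := by
      unfold finInc
      ext
      simp [hj2]
    rw [h0, pref_zero ε rfl]
    have : Finset.univ.filter (fun k : Fin (2 * d) => k.val < j.val + 1) = Finset.univ := by
      apply Finset.filter_true_of_mem
      intro k _; have := k.isLt; omega
    rw [key, this, sum_eps_zero ε ι hε₂ hιε hει]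

variable (i : Fin d)

include hε₂ hιε hει in
lemma eps_apply (k : Fin (2 * d)) :
    ε k i = (if k = ι (Pi.single i 1 : Zd d) then 1 else 0)
      + (if k = ι (Pi.single i (-1) : Zd d) then -1 else 0) := by
  have ha : ε (ι (Pi.single i 1 : Zd d)) = Pi.single i 1 := hει _ ⟨i, Or.inl rfl⟩
  have hb : ε (ι (Pi.single i (-1) : Zd d)) = Pi.single i (-1) := hει _ ⟨i, Or.inr rfl⟩
  have hab : ι (Pi.single i 1 : Zd d) ≠ ι (Pi.single i (-1) : Zd d) := by
    intro h
    have : (Pi.single i 1 : Zd d) = Pi.single i (-1) := by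
      rw [← ha, ← hb, h]
    have := congrFun this i
    simp at this
  obtain ⟨i', h | h⟩ := hε₂ k
  · by_cases hii : i' = i
    · subst hii
      have hk : k = ι (Pi.single i' 1 : Zd d) := by rw [← h, hιε]
      rw [hk, if_pos rfl, if_neg hab, ha]
      simp
    · have hk1 : k ≠ ι (Pi.single i 1 : Zd d) := by
        intro hk; rw [hk, ha] at h
        have := congrFun h i'
        simp [hii, Ne.symm hii] at this
      have hk2 : k ≠ ι (Pi.single i (-1) : Zd d) := by
        intro hk; rw [hk, hb] at h
        have := congrFun h i'
        simp [hii, Ne.symm hii] at this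
      rw [if_neg hk1, if_neg hk2, h]
      simp [hii]
  · by_cases hii : i' = i
    · subst hii
      have hk : k = ι (Pi.single i' (-1) : Zd d) := by rw [← h, hιε]
      rw [hk, if_neg (fun hc => hab hc.symm), if_pos rfl, hb]
      simp
    · have hk1 : k ≠ ι (Pi.single i 1 : Zd d) := by
        intro hk; rw [hk, ha] at h
        have := congrFun h i'
        simp [hii, Ne.symm hii] at this
      have hk2 : k ≠ ι (Pi.single i (-1) : Zd d) := by
        intro hk; rw [hk, hb] at h
        have := congrFun h i'
        simp [hii, Ne.symm hii] at this
      rw [if_neg hk1, if_neg hk2, h]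
      simp [hii]

include hε₂ hιε hει in
lemma pref_apply (j : Fin (2 * d)) :
    pref ε j i = (if (ι (Pi.single i 1 : Zd d)).val < j.val then 1 else 0)
      + (if (ι (Pi.single i (-1) : Zd d)).val < j.val then -1 else 0) := by
  unfold pref
  rw [Finset.sum_apply]
  calc ∑ k ∈ Finset.univ.filter (fun k : Fin (2*d) => k.val < j.val), ε k i
      = ∑ k ∈ Finset.univ.filter (fun k : Fin (2*d) => k.val < j.val),
        ((if k = ι (Pi.single i 1 : Zd d) then (1:ℤ) else 0)
          + (if k = ι (Pi.single i (-1) : Zd d) then -1 else 0)) := by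
        apply Finset.sum_congr rfl
        intro k _
        exact eps_apply ε ι hε₂ hιε hει i k
    _ = _ := by
        rw [Finset.sum_add_distrib, Finset.sum_ite_eq', Finset.sum_ite_eq']
        simp [Finset.mem_filter]

lemma sum_comp_update {α β γ : Type*} [DecidableEq α] [AddCommGroup γ]
    (s : Finset α) (g : α → β) (F : β → γ) (i : α) (hi : i ∈ s) (b : β) :
    ∑ x ∈ s, F (Function.update g i b x) = ∑ x ∈ s, F (g x) + F b - F (g i) := by
  have hpt : ∀ x ∈ s, F (Function.update g i b x)
      = Function.update (fun x => F (g x)) i (F b) x := by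
    intro x _
    by_cases h : x = i
    · subst h; simp
    · simp [Function.update_of_ne h]
  rw [Finset.sum_congr rfl hpt, Finset.sum_update_of_mem hi, ← Finset.sum_erase_add s _ hi,
    Finset.erase_eq]
  abel

variable (hε₂ : ∀ k, ε k ∈ Ed d) (hιε : ∀ k, ι (ε k) = k) (hει : ∀ v ∈ Ed d, ε (ι v) = v)

include hε₂ hιε hει in
lemma walk_sum (A : Finset (Zd d)) (x : Zd d × (Zd d → Fin (2 * d))) (t : ℕ)
    (h : ∀ s < t, ((rotorStep ε)^[s] x).1 ∈ A) :
    ((rotorStep ε)^[t] x).1 + ∑ v ∈ A, pref ε (x.2 v)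
      = x.1 + ∑ v ∈ A, pref ε (((rotorStep ε)^[t] x).2 v) := by
  induction t with
  | zero => simp
  | succ t ih =>
    have ih' := ih (fun s hs => h s (Nat.lt_succ_of_lt hs))
    have hmem : ((rotorStep ε)^[t] x).1 ∈ A := h t (Nat.lt_succ_self t)
    set y := (rotorStep ε)^[t] x with hy
    rw [Function.iterate_succ_apply', ← hy, rotorStep_eval]
    simp only
    rw [sum_comp_update A y.2 (pref ε) y.1 hmem,
      pref_finInc ε ι hε₂ hιε hει (y.2 y.1)]
    linear_combination ih' 

lemma finInc_iterate {n : ℕ} (a : Fin n) (j : ℕ) :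
    (finInc^[j] a).val = (a.val + j) % n := by
  induction j with
  | zero => simp [Nat.mod_eq_of_lt a.isLt]
  | succ j ih =>
    rw [Function.iterate_succ_apply']
    show ((finInc^[j] a).val + 1) % n = _
    rw [ih, Nat.mod_add_mod, Nat.add_assoc]

lemma finInc_reach {n : ℕ} (a b : Fin n) : ∃ j, finInc^[j] a = b := by
  refine ⟨b.val + (n - a.val), Fin.ext ?_⟩
  rw [finInc_iterate]
  have ha := a.isLt
  have hb := b.isLt
  have h1 : a.val + (b.val + (n - a.val)) = b.val + n := by omega
  rw [h1, Nat.add_mod_right, Nat.mod_eq_of_lt hb]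

include hει in
lemma exit_exists (hd : 0 < d) (A : Finset (Zd d)) (ℓ₀ : Zd d → Fin (2 * d)) :
    {n | ((rotorStep ε)^[n] (0, ℓ₀)).1 ∉ A}.Nonempty := by
  by_contra hne
  rw [Set.nonempty_def] at hne
  push_neg at hne
  simp only [Set.mem_setOf_eq, not_not] at hne
  set p : ℕ → Zd d := fun t => ((rotorStep ε)^[t] (0, ℓ₀)).1 with hp_def
  set L : ℕ → (Zd d → Fin (2 * d)) := fun t => ((rotorStep ε)^[t] (0, ℓ₀)).2 with hL_def
  have hin : ∀ t, p t ∈ A := hne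
  have hp : ∀ t, p (t + 1) = p t + ε (L t (p t)) := by
    intro t
    show ((rotorStep ε)^[t + 1] (0, ℓ₀)).1 = _
    rw [Function.iterate_succ_apply', rotorStep_eval]
  have hL : ∀ t, L (t + 1) = Function.update (L t) (p t) (finInc (L t (p t))) := by
    intro t
    show ((rotorStep ε)^[t + 1] (0, ℓ₀)).2 = _
    rw [Function.iterate_succ_apply', rotorStep_eval]
  have hLa : ∀ t, L (t + 1) (p t) = finInc (L t (p t)) := by
    intro t; rw [hL t]; simp
  have hLb : ∀ t v, v ≠ p t → L (t + 1) v = L t v := by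
    intro t v hv; rw [hL t]; exact Function.update_of_ne hv _ _
  set V : Set (Zd d) := {v | {t | p t = v}.Infinite} with hV_def
  have hVA : ∀ v ∈ V, v ∈ A := by
    intro v hv
    obtain ⟨t, ht⟩ := Set.Infinite.nonempty hv
    exact ht ▸ hin t
  have hV0 : V.Nonempty := by
    obtain ⟨a, ha⟩ := Finite.exists_infinite_fiber (fun t : ℕ => (⟨p t, hin t⟩ : {x // x ∈ A}))
    refine ⟨(a : Zd d), ?_⟩
    show {t | p t = (a : Zd d)}.Infinite
    have heq : {t | p t = (a : Zd d)}
        = (fun t : ℕ => (⟨p t, hin t⟩ : {x // x ∈ A})) ⁻¹' {a} := by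
      ext t
      simp [Subtype.ext_iff]
    rw [heq, ← Set.infinite_coe_iff]
    exact ha
  have hnext : ∀ v, {t | p t = v}.Infinite → ∀ t, p t = v →
      ∃ m, t < m ∧ p m = v ∧ L m v = finInc (L t v) := by
    intro v hv t ht
    obtain ⟨t', ht'S, htt'⟩ := hv.exists_gt t
    set S := {s : ℕ | t < s ∧ p s = v} with hS_def
    have hS : S.Nonempty := ⟨t', htt', ht'S⟩
    have hm : t < sInf S ∧ p (sInf S) = v := Nat.sInf_mem hS
    refine ⟨sInf S, hm.1, hm.2, ?_⟩
    have key : ∀ s, t + 1 ≤ s → s ≤ sInf S → L s v = finInc (L t v) := by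
      intro s hs
      induction s, hs using Nat.le_induction with
      | base =>
        intro _
        rw [← ht]
        exact hLa t
      | succ s hs ih =>
        intro hsm
        have h2 : s ∉ S := Nat.notMem_of_lt_sInf (by omega)
        have hps : p s ≠ v := fun hc => h2 ⟨by omega, hc⟩
        rw [hLb s v (fun hc => hps hc.symm), ih (by omega)]
    exact key (sInf S) (by omega) le_rfl
  have hreach : ∀ v, {t | p t = v}.Infinite → ∀ t, p t = v → ∀ j : ℕ,
      ∃ t', t ≤ t' ∧ p t' = v ∧ L t' v = finInc^[j] (L t v) := by
    intro v hv t ht j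
    induction j generalizing t with
    | zero => exact ⟨t, le_rfl, ht, rfl⟩
    | succ j ih =>
      obtain ⟨t1, h1, h2, h3⟩ := hnext v hv t ht
      obtain ⟨t', h4, h5, h6⟩ := ih t1 h2
      refine ⟨t', by omega, h5, ?_⟩
      rw [h6, h3, ← Function.iterate_succ_apply]
  have hVstep : ∀ v ∈ V, ∀ k : Fin (2 * d), v + ε k ∈ V := by
    intro v hv k
    have hSk : {t | p t = v ∧ L t v = k}.Infinite := by
      apply Set.infinite_of_not_bddAbove
      rintro ⟨M, hM⟩
      obtain ⟨t, ht, hMt⟩ := Set.Infinite.exists_gt hv M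
      obtain ⟨j, hj⟩ := finInc_reach (L t v) k
      obtain ⟨t', h1, h2, h3⟩ := hreach v hv t ht j
      have hmem : t' ∈ {t | p t = v ∧ L t v = k} := ⟨h2, by rw [h3, hj]⟩
      have := hM hmem
      omega
    have himg : ((fun t => t + 1) '' {t | p t = v ∧ L t v = k}) ⊆ {s | p s = v + ε k} := by
      rintro s ⟨t, ⟨ht, hLt⟩, rfl⟩
      show p (t + 1) = v + ε k
      rw [hp t, ht, hLt]
    exact Set.Infinite.mono himg
      (hSk.image (fun a _ b _ hab => by omega))
  obtain ⟨v₀, hv₀⟩ := hV0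
  have hi₀ : (0 : ℕ) < d := hd
  set e : Zd d := Pi.single ⟨0, hd⟩ (1 : ℤ) with he
  have hek : ε (ι e) = e := hει e ⟨⟨0, hd⟩, Or.inl rfl⟩
  have hchain : ∀ m : ℕ, v₀ + m • e ∈ V := by
    intro m
    induction m with
    | zero => simpa using hv₀
    | succ m ih =>
      have h2 := hVstep _ ih (ι e)
      rw [hek] at h2
      have h3 : v₀ + m • e + e = v₀ + (m + 1) • e := by
        rw [succ_nsmul, add_assoc]
      rwa [h3] at h2
  have hinj : Function.Injective (fun m : ℕ => v₀ + m • e) := by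
    intro a b hab
    have h4 := congrFun hab ⟨0, hd⟩
    simp [he] at h4
    omega
  exact (Set.infinite_of_injective_forall_mem hinj
    (fun m => hVA _ (hchain m))) A.finite_toSet

include hε₂ hιε hει in
lemma conf_invariant (hd : 0 < d) (n : ℕ) :
    (conf hd ε n).1.card = n + 1 ∧
    (∃ q ∈ (conf hd ε n).1, ((conf hd ε n).2 q).val = 0) ∧
    (∑ v ∈ (conf hd ε n).1, v = ∑ v ∈ (conf hd ε n).1, pref ε ((conf hd ε n).2 v)) := by
  induction n with
  | zero =>
    refine ⟨by simp [conf], ⟨0, by simp [conf], by simp [conf]⟩, ?_⟩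
    show ∑ v ∈ ({0} : Finset (Zd d)), v
        = ∑ v ∈ ({0} : Finset (Zd d)), pref ε ((conf hd ε 0).2 v)
    rw [Finset.sum_singleton, Finset.sum_singleton, pref_zero ε rfl]
  | succ n ih =>
    obtain ⟨hcard, ⟨q, hqA, hq0⟩, hsum⟩ := ih
    set c := conf hd ε n with hc
    have hconf : conf hd ε (n + 1) = grow hd ε c := by
      rw [hc, conf, conf, Function.iterate_succ_apply']
    set N := sInf {m | ((rotorStep ε)^[m] (0, c.2)).1 ∉ c.1} with hN
    set w := (rotorStep ε)^[N] (0, c.2) with hw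
    have hgrow : grow hd ε c = (insert w.1 c.1, Function.update w.2 w.1 ⟨0, by omega⟩) := rfl
    have hNonempty : {m | ((rotorStep ε)^[m] (0, c.2)).1 ∉ c.1}.Nonempty :=
      exit_exists ε ι hει hd c.1 c.2
    have hw1 : w.1 ∉ c.1 := Nat.sInf_mem hNonempty
    have hmem : ∀ s < N, ((rotorStep ε)^[s] (0, c.2)).1 ∈ c.1 := by
      intro s hs
      have h1 : s ∉ {m | ((rotorStep ε)^[m] (0, c.2)).1 ∉ c.1} :=
        Nat.notMem_of_lt_sInf hs
      simpa [Set.mem_setOf_eq, not_not] using h1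
    have hws := walk_sum ε ι hε₂ hιε hει c.1 (0, c.2) N hmem
    rw [hconf, hgrow]
    refine ⟨?_, ⟨w.1, ?_, ?_⟩, ?_⟩
    · simp [Finset.card_insert_of_notMem hw1, hcard]
    · simp
    · simp
    · dsimp only
      rw [Finset.sum_insert hw1, Finset.sum_insert hw1]
      have h2 : ∑ v ∈ c.1, pref ε (Function.update w.2 w.1 ⟨0, by omega⟩ v)
          = ∑ v ∈ c.1, pref ε (w.2 v) :=
        Finset.sum_congr rfl
          (fun v hv => by rw [Function.update_of_ne (fun h => hw1 (by rw [← h]; exact hv))])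
      rw [h2, Function.update_self, pref_zero ε rfl, hsum]
      simp only at hws
      linear_combination hws

end Aux

/-- If the rotor ordering satisfies the standard conventions
(i) `e_1 < e_2 < … < e_d` and (ii) `e_i < −e_i`, then for every `n` and every coordinate
`i`, `0 ≤ Σ_{v ∈ A_n} v_i ≤ n`; consequently the center of mass of the occupied sites lies
in the unit cube `{x : 0 ≤ x_i ≤ 1}`. -/
theorem center_of_mass_in_unit_cube (d : ℕ) (hd : 0 < d)
    (ε : Fin (2 * d) → Zd d) (ι : Zd d → Fin (2 * d))
    (hε₂ : ∀ k, ε k ∈ Ed d) (hιε : ∀ k, ι (ε k) = k) (hει : ∀ v ∈ Ed d, ε (ι v) = v)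
    (hord₁ : ∀ i j : Fin d, i < j →
      ι (Pi.single i 1 : Zd d) < ι (Pi.single j 1 : Zd d))
    (hord₂ : ∀ i : Fin d, ι (Pi.single i 1 : Zd d) < ι (Pi.single i (-1) : Zd d))
    (n : ℕ) (i : Fin d) :
    (0 ≤ ∑ v ∈ (conf hd ε n).1, v i ∧ ∑ v ∈ (conf hd ε n).1, v i ≤ (n : ℤ)) ∧
    (0 ≤ (∑ v ∈ (conf hd ε n).1, (v i : ℝ)) / ((conf hd ε n).1.card : ℝ) ∧
      (∑ v ∈ (conf hd ε n).1, (v i : ℝ)) / ((conf hd ε n).1.card : ℝ) ≤ 1) := by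
  obtain ⟨hcard, ⟨q, hqA, hq0⟩, hsum⟩ := conf_invariant ε ι hε₂ hιε hει hd n
  set A := (conf hd ε n).1 with hA
  set ℓ := (conf hd ε n).2 with hℓ
  have hsum_i : ∑ v ∈ A, v i = ∑ v ∈ A, pref ε (ℓ v) i := by
    have h1 := congrFun hsum i
    simp only [Finset.sum_apply] at h1
    exact h1
  have hbounds : ∀ j : Fin (2 * d), 0 ≤ pref ε j i ∧ pref ε j i ≤ 1 := by
    intro j
    rw [pref_apply ε ι hε₂ hιε hει i j]
    have hab : (ι (Pi.single i 1 : Zd d)).val < (ι (Pi.single i (-1) : Zd d)).val := hord₂ i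
    clear hsum_i hsum
    split_ifs <;> omega
  have hzero : pref ε (ℓ q) i = 0 := by
    rw [pref_zero ε hq0]
    rfl
  have hlow : 0 ≤ ∑ v ∈ A, v i := by
    rw [hsum_i]
    exact Finset.sum_nonneg (fun v _ => (hbounds (ℓ v)).1)
  have hupper : ∑ v ∈ A, v i ≤ (n : ℤ) := by
    rw [hsum_i]
    have h3 : ∑ v ∈ A.erase q, pref ε (ℓ v) i + pref ε (ℓ q) i = ∑ v ∈ A, pref ε (ℓ v) i :=
      Finset.sum_erase_add A _ hqA
    have h4 : ∑ v ∈ A.erase q, pref ε (ℓ v) i ≤ (A.erase q).card • (1 : ℤ) :=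
      Finset.sum_le_card_nsmul _ _ 1 (fun v _ => (hbounds _).2)
    have h5 : (A.erase q).card = n := by
      rw [Finset.card_erase_of_mem hqA, hcard]
      exact Nat.succ_sub_one n
    rw [← h3, hzero, add_zero]
    calc ∑ v ∈ A.erase q, pref ε (ℓ v) i ≤ (A.erase q).card • (1 : ℤ) := h4
      _ = (n : ℤ) := by rw [h5]; simp
  refine ⟨⟨hlow, hupper⟩, ?_, ?_⟩
  · apply div_nonneg
    · have : ((∑ v ∈ A, v i : ℤ) : ℝ) = ∑ v ∈ A, (v i : ℝ) := by norm_cast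
      rw [← this]
      exact_mod_cast hlow
    · positivity
  · rw [div_le_one (by rw [hcard]; positivity)]
    have h6 : ((∑ v ∈ A, v i : ℤ) : ℝ) = ∑ v ∈ A, (v i : ℝ) := by norm_cast
    rw [← h6, hcard]
    have : (∑ v ∈ A, v i : ℤ) ≤ (n : ℤ) + 1 :=
      le_trans hupper (le_add_of_nonneg_right zero_le_one)
    calc ((∑ v ∈ A, v i : ℤ) : ℝ) ≤ ((n : ℤ) + 1 : ℤ) := by exact_mod_cast this
      _ = ((n + 1 : ℕ) : ℝ) := by push_cast; ring
end

section
/- If (x_1, …, x_k) and (y_1, …, y_l) are both legal terminating firing sequences for an initial configuration (ρ₀, ν₀), then k = l and the two resulting configurations are identical. -/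
/-- The set `E₂ = {±e_1, ±e_2}` of cardinal directions in `ℤ²`. -/
def E2 : Set (ℤ × ℤ) := {(1, 0), (-1, 0), (0, 1), (0, -1)}

/-- A particle configuration: rotor directions and (finitely many) particles at each site. -/
abbrev PConfig := ((ℤ × ℤ) → Fin 4) × ((ℤ × ℤ) → ℕ)

/-- Firing the site `x`: one particle moves from `x` to `x + ε(ρ(x))`, and the rotor at `x`
is incremented by one modulo 4. -/
def fire (ε : Fin 4 → ℤ × ℤ) (c : PConfig) (x : ℤ × ℤ) : PConfig :=
  (Function.update c.1 x (c.1 x + 1),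
    fun z => (if z = x then c.2 z - 1 else c.2 z) + (if z = x + ε (c.1 x) then 1 else 0))

/-- Apply a sequence of firings in order. -/
def fireSeq (ε : Fin 4 → ℤ × ℤ) : List (ℤ × ℤ) → PConfig → PConfig
  | [], c => c
  | x :: xs, c => fireSeq ε xs (fire ε c x)

/-- A firing sequence is legal if each fired site holds at least two particles at the moment
it is fired. -/
def LegalSeq (ε : Fin 4 → ℤ × ℤ) : List (ℤ × ℤ) → PConfig → Prop
  | [], _ => True
  | x :: xs, c => 2 ≤ c.2 x ∧ LegalSeq ε xs (fire ε c x)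

/-- A firing sequence is terminating if the resulting configuration has at most one particle
at every site. -/
def Terminating (ε : Fin 4 → ℤ × ℤ) (l : List (ℤ × ℤ)) (c : PConfig) : Prop :=
  ∀ z : ℤ × ℤ, (fireSeq ε l c).2 z ≤ 1

/-
Two firings at distinct sites, each holding a particle, commute. Hence if a site `y` holds at least
two particles, it must be fired by every terminating sequence, and the first firing of `y` in a
legal sequence can be moved to the front without affecting legality or the outcome (no other
firing before it removes particles from `y`). Induction on one of the two sequences then matches
them firing by firing.
-/

section Firing

variable {ε : Fin 4 → ℤ × ℤ}

lemma fire_snd_le_of_ne (c : PConfig) {x y : ℤ × ℤ} (h : y ≠ x) : c.2 y ≤ (fire ε c x).2 y := by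
  simp only [fire, if_neg h]
  exact Nat.le_add_right _ _

-- Both sites must hold a particle: `fire` removes it by truncated subtraction in `ℕ`.
lemma fire_comm (c : PConfig) {x y : ℤ × ℤ} (hxy : x ≠ y) (hx : 1 ≤ c.2 x) (hy : 1 ≤ c.2 y) :
    fire ε (fire ε c x) y = fire ε (fire ε c y) x := by
  simp only [fire, Function.update_of_ne hxy, Function.update_of_ne hxy.symm]
  refine Prod.ext (Function.update_comm hxy _ _ _) (funext fun z => ?_)
  dsimp only
  split_ifs <;> grind

lemma le_fireSeq_snd_of_not_mem :
    ∀ (l : List (ℤ × ℤ)) (c : PConfig) {y : ℤ × ℤ}, y ∉ l → c.2 y ≤ (fireSeq ε l c).2 y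
  | [], _, _, _ => le_rfl
  | x :: xs, c, _, h => by
    rw [List.mem_cons, not_or] at h
    exact (fire_snd_le_of_ne c h.1).trans (le_fireSeq_snd_of_not_mem xs _ h.2)

lemma Terminating.mem_of_two_le {l : List (ℤ × ℤ)} {c : PConfig} {y : ℤ × ℤ}
    (ht : Terminating ε l c) (hy : 2 ≤ c.2 y) : y ∈ l := by
  by_contra h
  have := hy.trans ((le_fireSeq_snd_of_not_mem (ε := ε) l c h).trans (ht y))
  omega

lemma LegalSeq.move_to_front {y : ℤ × ℤ} :
    ∀ (a b : List (ℤ × ℤ)) (c : PConfig), y ∉ a → 2 ≤ c.2 y → LegalSeq ε (a ++ y :: b) c →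
      LegalSeq ε (y :: (a ++ b)) c ∧ fireSeq ε (a ++ y :: b) c = fireSeq ε (y :: (a ++ b)) c
  | [], _, _, _, _, hl => ⟨hl, rfl⟩
  | x :: a, b, c, ha, hy, ⟨hx, hl⟩ => by
    rw [List.mem_cons, not_or] at ha
    obtain ⟨⟨-, hl'⟩, heq⟩ :=
      move_to_front a b (fire ε c x) ha.2 (hy.trans (fire_snd_le_of_ne c ha.1)) hl
    have hcomm : fire ε (fire ε c x) y = fire ε (fire ε c y) x :=
      fire_comm c (Ne.symm ha.1) (by omega) (by omega)
    refine ⟨⟨hy, hx.trans (fire_snd_le_of_ne c (Ne.symm ha.1)), hcomm ▸ hl'⟩, ?_⟩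
    show fireSeq ε (a ++ y :: b) (fire ε c x) = fireSeq ε (a ++ b) (fire ε (fire ε c y) x)
    rw [heq, ← hcomm]
    rfl

theorem LegalSeq.terminating_unique :
    ∀ {l₁ l₂ : List (ℤ × ℤ)} {c : PConfig}, LegalSeq ε l₁ c → LegalSeq ε l₂ c →
      Terminating ε l₁ c → Terminating ε l₂ c →
      l₁.length = l₂.length ∧ fireSeq ε l₁ c = fireSeq ε l₂ c
  | [], [], _, _, _, _, _ => ⟨rfl, rfl⟩
  | _ :: _, [], _, ⟨hx, _⟩, _, _, t₂ => absurd (t₂.mem_of_two_le hx) List.not_mem_nil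
  | _, y :: _, c, h₁, ⟨hy, h₂⟩, t₁, t₂ => by
    obtain ⟨a, b, rfl, ha⟩ := List.eq_append_cons_of_mem (t₁.mem_of_two_le hy)
    obtain ⟨⟨-, h₁'⟩, heq⟩ := h₁.move_to_front a b c ha hy
    have t₁' : Terminating ε (a ++ b) (fire ε c y) := fun z => heq ▸ t₁ z
    obtain ⟨hlen, hfin⟩ := terminating_unique h₁' h₂ t₁' t₂
    refine ⟨?_, heq.trans hfin⟩
    simp only [List.length_append, List.length_cons] at hlen ⊢
    omega

end Firing

theorem rotor_firing_abelian_general (ε : Fin 4 → ℤ × ℤ)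
    (c₀ : PConfig)
    (l₁ l₂ : List (ℤ × ℤ))
    (h₁ : LegalSeq ε l₁ c₀) (h₂ : LegalSeq ε l₂ c₀)
    (t₁ : Terminating ε l₁ c₀) (t₂ : Terminating ε l₂ c₀) :
    l₁.length = l₂.length ∧ fireSeq ε l₁ c₀ = fireSeq ε l₂ c₀ :=
  h₁.terminating_unique h₂ t₁ t₂

/-- The abelian property: any two legal terminating firing sequences for the same initial
configuration have the same length and produce the same final configuration. -/
theorem rotor_firing_abelian (ε : Fin 4 → ℤ × ℤ)
    (hε₁ : Function.Injective ε) (hε₂ : ∀ k, ε k ∈ E2)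
    (hε₃ : ∀ v ∈ E2, ∃ k, ε k = v)
    (c₀ : PConfig) (hfin : (Function.support c₀.2).Finite)
    (l₁ l₂ : List (ℤ × ℤ))
    (h₁ : LegalSeq ε l₁ c₀) (h₂ : LegalSeq ε l₂ c₀)
    (t₁ : Terminating ε l₁ c₀) (t₂ : Terminating ε l₂ c₀) :
    l₁.length = l₂.length ∧ fireSeq ε l₁ c₀ = fireSeq ε l₂ c₀ :=
  rotor_firing_abelian_general ε c₀ l₁ l₂ h₁ h₂ t₁ t₂
end

section
/- For all n ∈ ℕ and all (x, y) ∈ ℤ², B_n(x, y) = 4^{−n} · c(n, n+x+y) · c(n, n+x−y), where c(n, t) equals the binomial coefficient C(n, t/2) if t is an even integer with 0 ≤ t ≤ 2n, and c(n, t) = 0 otherwise. -/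
/-- The discrete Laplacian on `ℤ²`:
`ΔF(x, y) = (1/4)(F(x+1,y) + F(x−1,y) + F(x,y+1) + F(x,y−1)) − F(x,y)`. -/
def discLap (F : ℤ → ℤ → ℚ) (x y : ℤ) : ℚ :=
  (F (x + 1) y + F (x - 1) y + F x (y + 1) + F x (y - 1)) / 4 - F x y

/-- `B_0` is the delta function at the origin and `B_n = B_{n−1} + ΔB_{n−1}`. -/
def Bfun : ℕ → ℤ → ℤ → ℚ
  | 0 => fun x y => if x = 0 ∧ y = 0 then 1 else 0
  | n + 1 => fun x y => Bfun n x y + discLap (Bfun n) x y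

/-- `c(n, t)` equals the binomial coefficient `C(n, t/2)` if `t` is an even integer with
`0 ≤ t ≤ 2n`, and `0` otherwise. -/
def cBin (n : ℕ) (t : ℤ) : ℚ :=
  if Even t ∧ 0 ≤ t ∧ t ≤ 2 * (n : ℤ) then (n.choose (t / 2).toNat : ℚ) else 0

lemma cBin_eval (n : ℕ) (t : ℤ) (he : Even t) (h0 : 0 ≤ t) :
    cBin n t = (n.choose (t / 2).toNat : ℚ) := by
  unfold cBin
  split_ifs with h
  · rfl
  · have hn : n < (t / 2).toNat := by
      obtain ⟨k, hk⟩ := he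
      have h2n : ¬ t ≤ 2 * (n:ℤ) := fun hle => h ⟨⟨k, hk⟩, h0, hle⟩
      omega
    rw [Nat.choose_eq_zero_of_lt hn, Nat.cast_zero]

lemma cBin_zero_of_neg (n : ℕ) (t : ℤ) (h : t < 0) : cBin n t = 0 := by
  unfold cBin; rw [if_neg]; intro ⟨_, h0, _⟩; omega

lemma cBin_succ (n : ℕ) (t : ℤ) : cBin (n + 1) t = cBin n t + cBin n (t - 2) := by
  by_cases he : Even t
  · by_cases h0 : 0 ≤ t
    · obtain ⟨k, hk⟩ := he
      rcases eq_or_lt_of_le h0 with h0' | h0'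
      · rw [← h0']
        rw [cBin_eval _ _ Even.zero le_rfl, cBin_eval _ _ Even.zero le_rfl,
          cBin_zero_of_neg _ _ (by norm_num)]
        simp
      · have h2 : (0:ℤ) ≤ t - 2 := by omega
        rw [cBin_eval _ _ ⟨k, hk⟩ h0, cBin_eval _ _ ⟨k, hk⟩ h0,
          cBin_eval _ _ ⟨k - 1, by omega⟩ h2]
        have hk1 : (t / 2).toNat = ((t - 2) / 2).toNat + 1 := by omega
        rw [hk1, Nat.choose_succ_succ']
        push_cast; ring
    · rw [cBin_zero_of_neg _ _ (by omega), cBin_zero_of_neg _ _ (by omega),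
        cBin_zero_of_neg _ _ (by omega)]
      ring
  · have he2 : ¬ Even (t - 2) := by
      intro ⟨k, hk⟩; exact he ⟨k + 1, by omega⟩
    unfold cBin
    rw [if_neg (fun h => he h.1), if_neg (fun h => he h.1), if_neg (fun h => he2 h.1)]
    ring

/-- Closed form: `B_n(x, y) = 4^{−n} · c(n, n+x+y) · c(n, n+x−y)`. -/
theorem Bfun_eq_binomial (n : ℕ) (x y : ℤ) :
    Bfun n x y = (4 : ℚ) ^ (-(n : ℤ)) * cBin n ((n : ℤ) + x + y) * cBin n ((n : ℤ) + x - y) := by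
  induction n generalizing x y with
  | zero =>
    simp only [Bfun, cBin, Nat.cast_zero, neg_zero, zpow_zero, one_mul]
    by_cases hx : x = 0 ∧ y = 0
    · obtain ⟨hx, hy⟩ := hx
      subst hx; subst hy
      norm_num
    · rw [if_neg hx]
      by_cases h1 : Even (0 + x + y) ∧ 0 ≤ 0 + x + y ∧ 0 + x + y ≤ 2 * (0:ℤ)
      · by_cases h2 : Even (0 + x - y) ∧ 0 ≤ 0 + x - y ∧ 0 + x - y ≤ 2 * (0:ℤ)
        · exfalso; apply hx; constructor <;> omega
        · rw [if_neg h2]; ring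
      · rw [if_neg h1]; ring
  | succ n ih =>
    have hstep : Bfun (n + 1) x y =
        (Bfun n (x + 1) y + Bfun n (x - 1) y + Bfun n x (y + 1) + Bfun n x (y - 1)) / 4 := by
      show Bfun n x y + discLap (Bfun n) x y = _
      unfold discLap; ring
    rw [hstep, ih, ih, ih, ih]
    set U : ℤ := ((n:ℤ) + 1) + x + y with hU
    set V : ℤ := ((n:ℤ) + 1) + x - y with hV
    have e1 : (n:ℤ) + (x + 1) + y = U := by omega
    have e2 : (n:ℤ) + (x + 1) - y = V := by omega
    have e3 : (n:ℤ) + (x - 1) + y = U - 2 := by omega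
    have e4 : (n:ℤ) + (x - 1) - y = V - 2 := by omega
    have e5 : (n:ℤ) + x + (y + 1) = U := by omega
    have e6 : (n:ℤ) + x - (y + 1) = V - 2 := by omega
    have e7 : (n:ℤ) + x + (y - 1) = U - 2 := by omega
    have e8 : (n:ℤ) + x - (y - 1) = V := by omega
    have eU : ((n:ℕ)+1:ℕ) = ((n:ℤ)+1) := by push_cast; ring
    rw [e1, e2, e3, e4, e5, e6, e7, e8]
    have hc1 : cBin (n+1) (((n+1:ℕ):ℤ) + x + y) = cBin n U + cBin n (U - 2) := by
      rw [cBin_succ]; congr 2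
    have hc2 : cBin (n+1) (((n+1:ℕ):ℤ) + x - y) = cBin n V + cBin n (V - 2) := by
      rw [cBin_succ]; congr 2
    rw [hc1, hc2]
    have hpow : (4:ℚ) ^ (-((n+1:ℕ):ℤ)) = (4:ℚ) ^ (-(n:ℤ)) / 4 := by
      push_cast
      rw [neg_add, zpow_add₀ (by norm_num : (4:ℚ) ≠ 0), zpow_neg_one]
      ring
    rw [hpow]
    ring
end
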